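/- arXiv:2507.05697 — 5 statements merged into one kernel-verified Lean document; each statement's English description precedes it below -/
import Mathlib

section
/- Let G be a finite graph. If there exists a spanning tree T of G such that T activates G (T → G in the K_3-bootstrap percolation process), then the 2-dimensional clique complex X^{(2)}(G) is simply connected. -/
namespace WSat

variable {V : Type} [Fintype V] [DecidableEq V]

/-- One step of `K₃`-bootstrap percolation inside an ambient graph `G`: the graph `B` is
obtained from `A` by adding a single edge of `G` that lies in a triangle of `B`. -/
def BootStep (G A B : SimpleGraph V) : Prop :=
  ∃ u v : V, G.Adj u v ∧ ¬ A.Adj u v ∧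
    B = A ⊔ SimpleGraph.fromEdgeSet {s(u, v)} ∧ ∃ w : V, A.Adj u w ∧ A.Adj v w

/-- `H` activates `G'` in `G` (written `H → G'` in the paper). -/
def Activates (G H G' : SimpleGraph V) : Prop :=
  H ≤ G ∧ Relation.ReflTransGen (BootStep G) H G'

/-- Elementary homotopy moves on closed walks (recorded as lists of vertices) in a
2-dimensional complex with 1-skeleton `G` and triangular faces `F`: inserting (or, by
symmetry, deleting) a backtrack, and replacing one side of a triangular face by the other
two sides. -/
inductive HStep (G : SimpleGraph V) (F : V → V → V → Prop) : List V → List V → Prop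
  | back (l₁ l₂ : List V) (a b : V) (h : G.Adj a b) :
      HStep G F (l₁ ++ a :: l₂) (l₁ ++ a :: b :: a :: l₂)
  | tri (l₁ l₂ : List V) (a b c : V) (h : F a b c) :
      HStep G F (l₁ ++ a :: b :: l₂) (l₁ ++ a :: c :: b :: l₂)

/-- A closed walk (given by its list of vertices) based at `x` is null-homotopic if it can
be transformed into the constant walk at `x` by elementary homotopy moves. -/
def NullHomotopic (G : SimpleGraph V) (F : V → V → V → Prop) (l : List V) (x : V) : Prop :=
  Relation.EqvGen (HStep G F) l [x]

/-- The faces of the 2-dimensional clique complex `X⁽²⁾(G)`: the triangles of `G`. -/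
def cliqueFaces (G : SimpleGraph V) (a b c : V) : Prop :=
  G.Adj a b ∧ G.Adj a c ∧ G.Adj b c

/-- The 2-dimensional clique complex `X⁽²⁾(G)` is simply connected: its 1-skeleton is
connected and every closed walk (equivalently, every cycle) is contractible. -/
def CliqueSimplyConnected (G : SimpleGraph V) : Prop :=
  G.Connected ∧ ∀ (x : V) (w : G.Walk x x), NullHomotopic G (cliqueFaces G) w.support x

section Aux

open Relation SimpleGraph

variable {G T A : SimpleGraph V} {F : V → V → V → Prop}

lemma hstep_cong {l l' : List V} (m₁ m₂ : List V) (h : HStep G F l l') :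
    HStep G F (m₁ ++ l ++ m₂) (m₁ ++ l' ++ m₂) := by
  cases h with
  | back l₁ l₂ a b hab =>
      have := HStep.back (G := G) (F := F) (m₁ ++ l₁) (l₂ ++ m₂) a b hab
      simpa [List.append_assoc] using this
  | tri l₁ l₂ a b c habc =>
      have := HStep.tri (G := G) (F := F) (m₁ ++ l₁) (l₂ ++ m₂) a b c habc
      simpa [List.append_assoc] using this

lemma eqv_cong {l l' : List V} (m₁ m₂ : List V)
    (h : EqvGen (HStep G F) l l') :
    EqvGen (HStep G F) (m₁ ++ l ++ m₂) (m₁ ++ l' ++ m₂) := by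
  induction h with
  | rel _ _ h => exact EqvGen.rel _ _ (hstep_cong m₁ m₂ h)
  | refl _ => exact EqvGen.refl _
  | symm _ _ _ ih => exact EqvGen.symm _ _ ih
  | trans _ _ _ _ _ ih₁ ih₂ => exact EqvGen.trans _ _ _ ih₁ ih₂

lemma eqv_append_right {l l' : List V} (m : List V)
    (h : EqvGen (HStep G F) l l') :
    EqvGen (HStep G F) (l ++ m) (l' ++ m) := by
  simpa using eqv_cong [] m h

lemma eqv_append_left {l l' : List V} (m : List V)
    (h : EqvGen (HStep G F) l l') :
    EqvGen (HStep G F) (m ++ l) (m ++ l') := by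
  simpa using eqv_cong m [] h

lemma walk_split :
    ∀ {u z : V} (p : G.Walk u z) {a b : V}, s(a, b) ∈ p.edges →
      (∃ (q : G.Walk u a) (r : G.Walk b z),
        p.support = q.support ++ r.support ∧ q.length + r.length + 1 = p.length) ∨
      (∃ (q : G.Walk u b) (r : G.Walk a z),
        p.support = q.support ++ r.support ∧ q.length + r.length + 1 = p.length) := by
  intro u z p
  induction p with
  | nil => intro a b h; simp at h
  | @cons u v z h p ih =>
      intro a b hmem
      rw [Walk.edges_cons, List.mem_cons] at hmem
      rcases hmem with heq | hmem
      · rcases Sym2.eq_iff.mp heq with ⟨ha, hb⟩ | ⟨ha, hb⟩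
        · subst ha; subst hb
          exact Or.inl ⟨Walk.nil, p, by simp, by simp⟩
        · subst ha; subst hb
          exact Or.inr ⟨Walk.nil, p, by simp, by simp⟩
      · rcases ih hmem with ⟨q, r, hs, hl⟩ | ⟨q, r, hs, hl⟩
        · exact Or.inl ⟨Walk.cons h q, r, by simp [hs], by simp; omega⟩
        · exact Or.inr ⟨Walk.cons h q, r, by simp [hs], by simp; omega⟩

lemma tree_null (hac : T.IsAcyclic) (hTG : T ≤ G) :
    ∀ (n : ℕ) {x : V} (w : T.Walk x x), w.length ≤ n →
      EqvGen (HStep G F) w.support [x] := by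
  intro n
  induction n with
  | zero =>
      intro x w hw
      cases w with
      | nil => exact EqvGen.refl _
      | cons h p => simp [Walk.length_cons] at hw
  | succ n ih =>
      intro x w hw
      cases w with
      | nil => exact EqvGen.refl _
      | @cons x y _ h p =>
        have hb : T.IsBridge s(x, y) :=
          (isAcyclic_iff_forall_edge_isBridge.mp hac) (T.mem_edgeSet.mpr h)
        have hmem : s(x, y) ∈ p.edges := by
          have := ((isBridge_iff_adj_and_forall_walk_mem_edges.mp hb) p.reverse)
          rwa [Walk.edges_reverse, List.mem_reverse] at this
        have hlen : p.length ≤ n := by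
          simpa [Walk.length_cons] using hw
        rcases walk_split p hmem with ⟨q, r, hs, hl⟩ | ⟨q, r, hs, hl⟩
        · -- q : Walk y x, r : Walk y x
          have h₁ : EqvGen (HStep G F) ((Walk.cons h q).support) [x] :=
            ih (Walk.cons h q) (by simp [Walk.length_cons]; omega)
          have h₂ : EqvGen (HStep G F) ((Walk.cons h r).support) [x] :=
            ih (Walk.cons h r) (by simp [Walk.length_cons]; omega)
          rw [Walk.support_cons] at h₁ h₂ ⊢
          rw [hs]
          have step1 : EqvGen (HStep G F) ((x :: q.support) ++ r.support)
              ([x] ++ r.support) := eqv_append_right _ h₁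
          simpa using EqvGen.trans _ _ _ step1 h₂
        · -- q : Walk y y, r : Walk x x
          have h₁ : EqvGen (HStep G F) q.support [y] := ih q (by omega)
          have h₂ : EqvGen (HStep G F) r.support [x] := ih r (by omega)
          rw [Walk.support_cons, hs]
          have step1 : EqvGen (HStep G F) (([x] ++ q.support) ++ r.support)
              (([x] ++ [y]) ++ r.support) := eqv_append_right _ (eqv_append_left [x] h₁)
          have step2 : EqvGen (HStep G F) ([x, y] ++ r.support) ([x, y] ++ [x]) :=
            eqv_append_left _ h₂
          have step3 : EqvGen (HStep G F) [x, y, x] [x] :=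
            EqvGen.symm _ _ (EqvGen.rel _ _ (HStep.back [] [] x y (hTG h)))
          exact EqvGen.trans _ _ _ (by simpa using step1)
            (EqvGen.trans _ _ _ step2 step3)

lemma transfer {u v w : V} (hAG : A ≤ G)
    (huv : G.Adj u v) (h1 : A.Adj u w) (h2 : A.Adj v w) :
    ∀ {a c : V} (p : (A ⊔ SimpleGraph.fromEdgeSet {s(u, v)}).Walk a c),
      ∃ q : A.Walk a c, EqvGen (HStep G (cliqueFaces G)) p.support q.support := by
  intro a c p
  induction p with
  | nil => exact ⟨Walk.nil, EqvGen.refl _⟩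
  | @cons a b c hab p ih =>
      obtain ⟨q', hq'⟩ := ih
      by_cases hA : A.Adj a b
      · refine ⟨Walk.cons hA q', ?_⟩
        rw [Walk.support_cons, Walk.support_cons]
        simpa using eqv_append_left [a] hq'
      · have hedge : s(a, b) = s(u, v) := by
          rcases (SimpleGraph.sup_adj _ _ _ _).mp hab with h' | h'
          · exact absurd h' hA
          · exact ((SimpleGraph.fromEdgeSet_adj _).mp h').1
        obtain ⟨t, ht⟩ : ∃ t, q'.support = b :: t := ⟨_, q'.support_eq_cons⟩
        rcases Sym2.eq_iff.mp hedge with ⟨ha', hb'⟩ | ⟨ha', hb'⟩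
        · subst ha'; subst hb'
          refine ⟨Walk.cons h1 (Walk.cons h2.symm q'), ?_⟩
          rw [Walk.support_cons, Walk.support_cons, Walk.support_cons]
          refine EqvGen.trans _ _ _ (by simpa using eqv_append_left [a] hq') ?_
          rw [ht]
          exact EqvGen.rel _ _ (HStep.tri [] t a b w ⟨huv, hAG h1, hAG h2⟩)
        · subst ha'; subst hb'
          refine ⟨Walk.cons h2 (Walk.cons h1.symm q'), ?_⟩
          rw [Walk.support_cons, Walk.support_cons, Walk.support_cons]
          refine EqvGen.trans _ _ _ (by simpa using eqv_append_left [a] hq') ?_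
          rw [ht]
          exact EqvGen.rel _ _ (HStep.tri [] t a b w ⟨huv.symm, hAG h2, hAG h1⟩)

lemma step_pres {B : SimpleGraph V} (hstep : BootStep G A B)
    (hP : A ≤ G ∧ ∀ x (wk : A.Walk x x),
      EqvGen (HStep G (cliqueFaces G)) wk.support [x]) :
    B ≤ G ∧ ∀ x (wk : B.Walk x x),
      EqvGen (HStep G (cliqueFaces G)) wk.support [x] := by
  obtain ⟨u, v, huv, hnA, rfl, w, h1, h2⟩ := hstep
  obtain ⟨hAG, hnull⟩ := hP
  constructor
  · refine sup_le hAG ?_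
    intro a b hab
    rcases (SimpleGraph.fromEdgeSet_adj _).mp hab with ⟨heq, -⟩
    rcases Sym2.eq_iff.mp heq with ⟨ha', hb'⟩ | ⟨ha', hb'⟩
    · subst ha'; subst hb'; exact huv
    · subst ha'; subst hb'; exact huv.symm
  · intro x wk
    obtain ⟨q, hq⟩ := transfer hAG huv h1 h2 wk
    exact EqvGen.trans _ _ _ hq (hnull x q)

end Aux

/-- If a finite graph `G` has a spanning tree `T` with `T → G`, then
the 2-dimensional clique complex `X⁽²⁾(G)` is simply connected. -/
theorem statement4 (G T : SimpleGraph V) (hT : T.IsTree) (hTG : T ≤ G)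
    (hact : Activates G T G) :
    CliqueSimplyConnected G := by
  obtain ⟨hTG', hchain⟩ := hact
  have key : ∀ C, Relation.ReflTransGen (BootStep G) T C →
      (C ≤ G ∧ ∀ x (wk : C.Walk x x),
        Relation.EqvGen (HStep G (cliqueFaces G)) wk.support [x]) := by
    intro C h
    induction h with
    | refl =>
        exact ⟨hTG, fun x wk => tree_null hT.IsAcyclic hTG wk.length wk le_rfl⟩
    | tail _ hstep ih => exact step_pres hstep ih
  exact ⟨hT.isConnected.mono hTG, (key G hchain).2⟩

end WSat
end

section
/- Suppose C is an ℓ-cycle and H activates C via a nice activation process A = (H; Δ_1,…,Δ_s). Let G = K^{(1)}(A) = H ∪ Δ_1 ∪ ⋯ ∪ Δ_s. Then |E(G)| ≥ 3|V(H)| + 3·d_H + exc(A) − (3 + ℓ), where d_H = |E(H)| − |V(H)| + 1. Moreover |E(G)| = 3|E(H)| + exc(A) − ℓ. -/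
namespace WSat

variable {V : Type} [Fintype V] [DecidableEq V]

/-- The edges of the triangle recorded in an activation step `(a, b, c)`:
the step activates the edge `{a, b}` using the triangle `{a, b, c}`. -/
def triEdges (st : V × V × V) : Set (Sym2 V) :=
  {s(st.1, st.2.1), s(st.1, st.2.2), s(st.2.1, st.2.2)}

/-- The graph `H ∪ Δ₁ ∪ ⋯ ∪ Δ_s`. -/
def afterGraph (H : SimpleGraph V) (steps : List (V × V × V)) : SimpleGraph V :=
  H ⊔ SimpleGraph.fromEdgeSet {e | ∃ st ∈ steps, e ∈ triEdges st}

/-- `(H; Δ₁, …, Δ_s)` is a (`K₃`-bootstrap) activation process: at each step `i`, the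
step `(a, b, c)` adds the new edge `{a, b}` (not present before), which forms the triangle
`{a, b, c}` together with the two previously present edges `{a, c}` and `{b, c}`. -/
def IsValidProcess (H : SimpleGraph V) (steps : List (V × V × V)) : Prop :=
  ∀ (i : ℕ) (hi : i < steps.length),
    (steps.get ⟨i, hi⟩).1 ≠ (steps.get ⟨i, hi⟩).2.1 ∧
    ¬ (afterGraph H (steps.take i)).Adj (steps.get ⟨i, hi⟩).1 (steps.get ⟨i, hi⟩).2.1 ∧
    (afterGraph H (steps.take i)).Adj (steps.get ⟨i, hi⟩).1 (steps.get ⟨i, hi⟩).2.2 ∧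
    (afterGraph H (steps.take i)).Adj (steps.get ⟨i, hi⟩).2.1 (steps.get ⟨i, hi⟩).2.2

/-- The number of (non-isolated) vertices of `G`. -/
noncomputable def supportCard (G : SimpleGraph V) : ℕ := Nat.card G.support

/-- The number of edges of `G`. -/
noncomputable def edgeCard (G : SimpleGraph V) : ℕ := Nat.card G.edgeSet

/-- `con_A(e)`: the number of triangles of the process containing `e` that do not
activate `e`. -/
noncomputable def conA (steps : List (V × V × V)) (e : Sym2 V) : ℕ :=
  Nat.card {i : Fin steps.length //
    e = s((steps.get i).1, (steps.get i).2.2) ∨ e = s((steps.get i).2.1, (steps.get i).2.2)}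

open scoped Classical in
/-- `exc_A(e)` relative to the initial graph `H` and the target graph `C`. -/
noncomputable def excA (H C : SimpleGraph V) (steps : List (V × V × V)) (e : Sym2 V) : ℤ :=
  (conA steps e : ℤ) -
    (if e ∈ C.edgeSet then (if e ∈ H.edgeSet then 1 else 0)
     else (if e ∈ H.edgeSet then 2 else 1))

/-- `exc(A) = Σ_e exc_A(e)`, summed over the edges of `K(A)`. -/
noncomputable def excSum (H C : SimpleGraph V) (steps : List (V × V × V)) : ℤ :=
  ∑ᶠ e ∈ (afterGraph H steps).edgeSet, excA H C steps e

/-- A nice activation process from `H` activating `C` (that is, every edge of the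
activation complex has nonnegative excess). -/
def NiceProcess (H C : SimpleGraph V) (steps : List (V × V × V)) : Prop :=
  IsValidProcess H steps ∧ C ≤ afterGraph H steps ∧
    ∀ e ∈ (afterGraph H steps).edgeSet, 0 ≤ excA H C steps e

/-- A nice activation process from `H` activating `C` inside the ambient graph `G`. -/
def NiceActivation (G H C : SimpleGraph V) (steps : List (V × V × V)) : Prop :=
  NiceProcess H C steps ∧ afterGraph H steps ≤ G

/-- The subgraph consisting of the edges of the walk `w`. -/
def walkEdgeGraph {G : SimpleGraph V} {x y : V} (w : G.Walk x y) : SimpleGraph V :=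
  SimpleGraph.fromEdgeSet {e | e ∈ w.edges}

/-- The complexity `d_H = |E(H)| − |V(H)| + 1` of a graph `H`. -/
noncomputable def complexity (H : SimpleGraph V) : ℤ :=
  (edgeCard H : ℤ) - (supportCard H : ℤ) + 1

section Aux

variable {V : Type} [Fintype V] [DecidableEq V]

lemma afterGraph_edgeSet (H : SimpleGraph V) (l : List (V × V × V)) :
    (afterGraph H l).edgeSet =
      H.edgeSet ∪ ({e | ∃ st ∈ l, e ∈ triEdges st} \ {e | e.IsDiag}) := by
  simp [afterGraph, SimpleGraph.edgeSet_sup, SimpleGraph.edgeSet_fromEdgeSet]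
  rfl

lemma afterGraph_mono (H : SimpleGraph V) {l₁ l₂ : List (V × V × V)}
    (h : ∀ st ∈ l₁, st ∈ l₂) : afterGraph H l₁ ≤ afterGraph H l₂ := by
  refine sup_le_sup le_rfl (SimpleGraph.fromEdgeSet_mono ?_)
  rintro e ⟨st, hst, he⟩
  exact ⟨st, h st hst, he⟩

lemma afterGraph_append_edgeSet (H : SimpleGraph V) (l : List (V × V × V)) (st : V × V × V) :
    (afterGraph H (l ++ [st])).edgeSet =
      (afterGraph H l).edgeSet ∪ (triEdges st \ {e | e.IsDiag}) := by
  rw [afterGraph_edgeSet, afterGraph_edgeSet]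
  have : {e : Sym2 V | ∃ s ∈ l ++ [st], e ∈ triEdges s} =
      {e | ∃ s ∈ l, e ∈ triEdges s} ∪ triEdges st := by
    ext e; simp [or_and_right, exists_or]
  rw [this, Set.union_diff_distrib, Set.union_assoc]

lemma edgeSet_ncard_take (H : SimpleGraph V) (steps : List (V × V × V))
    (hv : IsValidProcess H steps) :
    ∀ n, n ≤ steps.length →
      ((afterGraph H (steps.take n)).edgeSet).ncard = H.edgeSet.ncard + n := by
  intro n
  induction n with
  | zero =>
    intro _
    have : afterGraph H (steps.take 0) = H := by
      ext a b
      simp [afterGraph]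
    rw [this]
    omega
  | succ n ih =>
    intro hn1
    have hn : n < steps.length := hn1
    obtain ⟨hne, hnadj, hadj1, hadj2⟩ := hv n hn
    set a := (steps.get ⟨n, hn⟩).1 with ha
    set b := (steps.get ⟨n, hn⟩).2.1 with hb
    set c := (steps.get ⟨n, hn⟩).2.2 with hc
    have htake : steps.take (n + 1) = steps.take n ++ [steps.get ⟨n, hn⟩] := by
      rw [List.take_succ, List.getElem?_eq_getElem hn]
      rfl
    have hac : s(a, c) ∈ (afterGraph H (steps.take n)).edgeSet := hadj1
    have hbc : s(b, c) ∈ (afterGraph H (steps.take n)).edgeSet := hadj2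
    have hab : s(a, b) ∉ (afterGraph H (steps.take n)).edgeSet := hnadj
    have hset : (afterGraph H (steps.take (n + 1))).edgeSet =
        insert s(a, b) (afterGraph H (steps.take n)).edgeSet := by
      rw [htake, afterGraph_append_edgeSet]
      apply Set.Subset.antisymm
      · rintro e (he | ⟨he, -⟩)
        · exact Set.mem_insert_of_mem _ he
        · rcases he with he | he | he
          · exact he ▸ Set.mem_insert _ _
          · exact Set.mem_insert_of_mem _ (he ▸ hac)
          · exact Set.mem_insert_of_mem _ (he ▸ hbc)
      · rintro e (rfl | he)
        · refine Or.inr ⟨Or.inl rfl, ?_⟩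
          simpa using hne
        · exact Or.inl he
    rw [hset, Set.ncard_insert_of_notMem hab (Set.toFinite _), ih (le_of_lt hn)]
    omega

lemma edgeSet_ncard_afterGraph (H : SimpleGraph V) (steps : List (V × V × V))
    (hv : IsValidProcess H steps) :
    (afterGraph H steps).edgeSet.ncard = H.edgeSet.ncard + steps.length := by
  have := edgeSet_ncard_take H steps hv steps.length le_rfl
  rwa [List.take_length] at this

lemma conA_eq_filter_card (steps : List (V × V × V)) (e : Sym2 V) :
    conA steps e = (Finset.univ.filter (fun i : Fin steps.length =>
      e = s((steps.get i).1, (steps.get i).2.2) ∨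
      e = s((steps.get i).2.1, (steps.get i).2.2))).card := by
  rw [conA, Nat.card_eq_fintype_card]
  convert Fintype.card_subtype _

lemma sum_conA (H : SimpleGraph V) (steps : List (V × V × V))
    (hv : IsValidProcess H steps) (F : Finset (Sym2 V))
    (hF : ∀ e, e ∈ F ↔ e ∈ (afterGraph H steps).edgeSet) :
    ∑ e ∈ F, conA steps e = 2 * steps.length := by
  simp_rw [conA_eq_filter_card, Finset.card_filter]
  rw [Finset.sum_comm]
  have hstep : ∀ i : Fin steps.length,
      (∑ e ∈ F, if e = s((steps.get i).1, (steps.get i).2.2) ∨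
        e = s((steps.get i).2.1, (steps.get i).2.2) then 1 else 0) = 2 := by
    intro i
    have hvi := hv i.1 i.2
    simp only [Fin.eta] at hvi
    obtain ⟨hne, hnadj, hadj1, hadj2⟩ := hvi
    have hmono : afterGraph H (steps.take i.1) ≤ afterGraph H steps :=
      afterGraph_mono H (fun st h => List.mem_of_mem_take h)
    have h1 : s((steps.get i).1, (steps.get i).2.2) ∈ F := (hF _).2 (hmono hadj1)
    have h2 : s((steps.get i).2.1, (steps.get i).2.2) ∈ F := (hF _).2 (hmono hadj2)
    have hne2 : s((steps.get i).1, (steps.get i).2.2) ≠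
        s((steps.get i).2.1, (steps.get i).2.2) := by
      intro h
      rw [Sym2.eq_iff] at h
      rcases h with ⟨h, -⟩ | ⟨h1', h2'⟩
      · exact hne h
      · exact hne (h1'.trans h2')
    rw [← Finset.card_filter]
    have : F.filter (fun e => e = s((steps.get i).1, (steps.get i).2.2) ∨
        e = s((steps.get i).2.1, (steps.get i).2.2)) =
        {s((steps.get i).1, (steps.get i).2.2), s((steps.get i).2.1, (steps.get i).2.2)} := by
      ext e
      simp only [Finset.mem_filter, Finset.mem_insert, Finset.mem_singleton]
      constructor
      · rintro ⟨-, h⟩; exact h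
      · rintro (rfl | rfl)
        · exact ⟨h1, Or.inl rfl⟩
        · exact ⟨h2, Or.inr rfl⟩
    rw [this, Finset.card_pair hne2]
  rw [Finset.sum_congr rfl (fun i _ => hstep i)]
  simp [mul_comm]

lemma walkEdgeGraph_edgeSet {G : SimpleGraph V} {x y : V} (w : G.Walk x y) :
    (walkEdgeGraph w).edgeSet = {e | e ∈ w.edges} := by
  rw [walkEdgeGraph, SimpleGraph.edgeSet_fromEdgeSet]
  ext e
  simp only [Set.mem_diff, Set.mem_setOf_eq]
  exact ⟨fun h => h.1,
    fun h => ⟨h, G.not_isDiag_of_mem_edgeSet (w.edges_subset_edgeSet h)⟩⟩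

lemma walkEdgeGraph_le {G : SimpleGraph V} {x y : V} (w : G.Walk x y) :
    walkEdgeGraph w ≤ G := by
  intro u v huv
  rw [walkEdgeGraph, SimpleGraph.fromEdgeSet_adj] at huv
  exact (G.mem_edgeSet).1 (w.edges_subset_edgeSet huv.1)

end Aux

/-- If `C` is an `ℓ`-cycle and `H → C` via a nice activation process
`A = (H; Δ₁, …, Δ_s)`, and `G = K⁽¹⁾(A)`, then
`|E(G)| ≥ 3|V(H)| + 3 d_H + exc(A) − (3 + ℓ)`; moreover
`|E(G)| = 3|E(H)| + exc(A) − ℓ`. -/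
theorem statement8 (ℓ : ℕ) (H : SimpleGraph V) (steps : List (V × V × V)) (x : V)
    (wk : (afterGraph H steps).Walk x x) (hcyc : wk.IsCycle) (hlen : wk.length = ℓ)
    (hnice : NiceProcess H (walkEdgeGraph wk) steps) :
    3 * (supportCard H : ℤ) + 3 * complexity H + excSum H (walkEdgeGraph wk) steps
        - (3 + (ℓ : ℤ)) ≤ (edgeCard (afterGraph H steps) : ℤ) ∧
    (edgeCard (afterGraph H steps) : ℤ)
        = 3 * (edgeCard H : ℤ) + excSum H (walkEdgeGraph wk) steps - (ℓ : ℤ) := by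
  classical
  obtain ⟨hv, hC, -⟩ := hnice
  set C := walkEdgeGraph wk with hCdef
  have hfin : (afterGraph H steps).edgeSet.Finite := Set.toFinite _
  set F := hfin.toFinset with hFdef
  have hFmem : ∀ e, e ∈ F ↔ e ∈ (afterGraph H steps).edgeSet := fun e => hfin.mem_toFinset
  have hHle : H ≤ afterGraph H steps := le_sup_left
  have hHsub : H.edgeSet ⊆ (afterGraph H steps).edgeSet := SimpleGraph.edgeSet_mono hHle
  have hCsub : C.edgeSet ⊆ (afterGraph H steps).edgeSet := SimpleGraph.edgeSet_mono hC
  -- cardinalities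
  have hEG : edgeCard (afterGraph H steps) = F.card := by
    rw [edgeCard, Nat.card_coe_set_eq, Set.ncard_eq_toFinset_card _ hfin]
  have hEH : edgeCard H = H.edgeSet.ncard := by
    rw [edgeCard, Nat.card_coe_set_eq]
  have hcount : (afterGraph H steps).edgeSet.ncard = H.edgeSet.ncard + steps.length :=
    edgeSet_ncard_afterGraph H steps hv
  have hFcard : F.card = H.edgeSet.ncard + steps.length := by
    rw [← hcount, Set.ncard_eq_toFinset_card _ hfin]
  -- cycle has ℓ edges
  have hCcard : C.edgeSet.ncard = ℓ := by
    rw [hCdef, walkEdgeGraph_edgeSet]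
    have : {e : Sym2 V | e ∈ wk.edges} = ↑wk.edges.toFinset := (List.coe_toFinset _).symm
    rw [this, Set.ncard_coe_finset, List.toFinset_card_of_nodup hcyc.edges_nodup,
      SimpleGraph.Walk.length_edges, hlen]
  -- filters
  have hfilH : (F.filter (fun e => e ∈ H.edgeSet)).card = H.edgeSet.ncard := by
    have hfe : (F.filter (fun e => e ∈ H.edgeSet)) = (Set.toFinite H.edgeSet).toFinset := by
      ext e
      simp only [Finset.mem_filter, Set.Finite.mem_toFinset, hFmem]
      exact ⟨fun h => h.2, fun h => ⟨hHsub h, h⟩⟩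
    rw [hfe, ← Set.ncard_eq_toFinset_card]
  have hfilC : (F.filter (fun e => e ∈ C.edgeSet)).card = ℓ := by
    have hfe : (F.filter (fun e => e ∈ C.edgeSet)) = (Set.toFinite C.edgeSet).toFinset := by
      ext e
      simp only [Finset.mem_filter, Set.Finite.mem_toFinset, hFmem]
      exact ⟨fun h => h.2, fun h => ⟨hCsub h, h⟩⟩
    rw [hfe, ← Set.ncard_eq_toFinset_card, hCcard]
  -- the excess sum
  have hsum : excSum H C steps = ∑ e ∈ F, excA H C steps e := by
    rw [excSum, ← hfin.coe_toFinset, finsum_mem_coe_finset]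
  have hw : ∀ e : Sym2 V,
      (if e ∈ C.edgeSet then (if e ∈ H.edgeSet then (1 : ℤ) else 0)
        else (if e ∈ H.edgeSet then 2 else 1)) =
      (if e ∈ H.edgeSet then (1 : ℤ) else 0) + (1 - (if e ∈ C.edgeSet then (1 : ℤ) else 0)) := by
    intro e
    split_ifs <;> ring
  have hsum2 : excSum H C steps =
      (∑ e ∈ F, (conA steps e : ℤ)) -
        ((∑ e ∈ F, (if e ∈ H.edgeSet then (1 : ℤ) else 0)) +
          ((F.card : ℤ) - ∑ e ∈ F, (if e ∈ C.edgeSet then (1 : ℤ) else 0))) := by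
    rw [hsum]
    unfold excA
    rw [Finset.sum_sub_distrib]
    congr 1
    rw [Finset.sum_congr rfl (fun e _ => hw e), Finset.sum_add_distrib,
      Finset.sum_sub_distrib]
    simp
  have hsumcon : (∑ e ∈ F, (conA steps e : ℤ)) = 2 * (steps.length : ℤ) := by
    rw [← Nat.cast_sum, sum_conA H steps hv F hFmem]
    push_cast
    ring
  have hsumH : (∑ e ∈ F, (if e ∈ H.edgeSet then (1 : ℤ) else 0)) = (H.edgeSet.ncard : ℤ) := by
    rw [Finset.sum_boole, hfilH]
  have hsumC : (∑ e ∈ F, (if e ∈ C.edgeSet then (1 : ℤ) else 0)) = (ℓ : ℤ) := by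
    rw [Finset.sum_boole, hfilC]
  have hexc : excSum H C steps =
      2 * (steps.length : ℤ) - ((H.edgeSet.ncard : ℤ) + ((F.card : ℤ) - (ℓ : ℤ))) := by
    rw [hsum2, hsumcon, hsumH, hsumC]
  have hFcard' : (F.card : ℤ) = (H.edgeSet.ncard : ℤ) + (steps.length : ℤ) := by
    exact_mod_cast hFcard
  constructor
  · rw [complexity, hexc, hEG, hEH]
    push_cast
    linarith
  · rw [hexc, hEG, hEH]
    push_cast
    linarith

end WSat
end

section
/- Suppose W_1, W_2, …, W_k are walks on trees T_1 ⊆ T_2 ⊆ ⋯ ⊆ T_k, respectively, such that for every 1 ≤ i ≤ k, each edge of T_i is covered by the union of walks W_1 ∪ ⋯ ∪ W_i either exactly once or exactly twice (counted with multiplicity over all traversals). For every 1 ≤ i ≤ k, let F_i be the set of edges of T_i covered exactly once by W_1 ∪ ⋯ ∪ W_i. Then, for every 1 ≤ i ≤ k−1, the set of edges E(F_i) ∩ E(W_{i+1}) ⊆ T_i forms a path. -/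
namespace WSat

variable {V : Type} [Fintype V] [DecidableEq V]

/-- The number of times the walk recorded by the vertex list `l` traverses the edge
`e`. -/
def walkEdgeCount (l : List V) (e : Sym2 V) : ℕ :=
  (l.zip l.tail).countP fun q => decide (s(q.1, q.2) = e)

/-- The set of edges traversed by the walk recorded by the vertex list `l`. -/
def listEdges (l : List V) : Set (Sym2 V) :=
  {e | ∃ q ∈ l.zip l.tail, e = s(q.1, q.2)}

/-- The edge set `S` forms a path. -/
def EdgeSetIsPath (S : Set (Sym2 V)) : Prop :=
  ∃ (u v : V) (w : (SimpleGraph.fromEdgeSet S).Walk u v), w.IsPath ∧ S = {e | e ∈ w.edges}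

/-- A tree: an acyclic graph which is connected on its set of non-isolated vertices. -/
def IsTreeGraph (T : SimpleGraph V) : Prop :=
  T.IsAcyclic ∧ ∀ u ∈ T.support, ∀ v ∈ T.support, T.Reachable u v

open SimpleGraph

/-- Convert a nonempty list that is a chain for the adjacency relation into a walk. -/
lemma exists_walk_of_chain (G : SimpleGraph V) :
    ∀ (l : List V) (a : V), (a :: l).Chain' G.Adj →
      ∃ (b : V) (w : G.Walk a b),
        w.edges = ((a :: l).zip l).map fun q => s(q.1, q.2) := by
  intro l
  induction l with
  | nil => exact fun a _ => ⟨a, Walk.nil, by simp⟩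
  | cons b t ih =>
    intro a h
    simp only [List.Chain', List.isChain_cons_cons] at h
    obtain ⟨c, w, hw⟩ := ih b h.2
    exact ⟨c, Walk.cons h.1 w, by simp [hw]⟩

lemma walkEdgeCount_eq_count (l : List V) (e : Sym2 V) :
    walkEdgeCount l e = ((l.zip l.tail).map fun q => s(q.1, q.2)).count e := by
  unfold walkEdgeCount
  rw [List.count, List.countP_map]
  apply List.countP_congr
  intro q _
  simp [Function.comp]

lemma listEdges_eq (l : List V) :
    listEdges l = {e | e ∈ (l.zip l.tail).map fun q => s(q.1, q.2)} := by
  ext e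
  simp [listEdges, eq_comm]

/-- In an acyclic graph, the set of edges traversed an odd number of times by a walk
is exactly the edge set of the (unique) path between its endpoints. -/
lemma odd_count_iff_mem_path {G : SimpleGraph V} (hG : G.IsAcyclic) :
    ∀ {u v : V} (w : G.Walk u v) (p : G.Walk u v), p.IsPath →
      ∀ e, (Odd (w.edges.count e) ↔ e ∈ p.edges) := by
  intro u v w
  induction w with
  | nil =>
    intro p hp e
    have hpnil : p = Walk.nil := by
      have := hG.path_unique ⟨p, hp⟩ ⟨Walk.nil, Walk.IsPath.nil⟩
      exact congrArg Subtype.val this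
    subst hpnil
    simp [Nat.odd_iff]
  | @cons u x v h w' ih =>
    intro p hp e
    obtain ⟨q, hq⟩ := w'.toPath
    have hIH : ∀ e, Odd (w'.edges.count e) ↔ e ∈ q.edges := ih q hq
    have hedge_one : (Walk.cons h.symm (Walk.nil : G.Walk u u)).IsPath := by
      simp [Walk.cons_isPath_iff, h.ne']
    by_cases hmem : s(u, x) ∈ q.edges
    · have hu : u ∈ q.support := q.fst_mem_support_of_mem_edges hmem
      have htake : q.takeUntil u hu = Walk.cons h.symm Walk.nil := by
        have := hG.path_unique ⟨q.takeUntil u hu, hq.takeUntil hu⟩ ⟨_, hedge_one⟩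
        exact congrArg Subtype.val this
      have hdrop : p = q.dropUntil u hu := by
        have := hG.path_unique ⟨p, hp⟩ ⟨_, hq.dropUntil hu⟩
        exact congrArg Subtype.val this
      have hedges : q.edges = s(u, x) :: (q.dropUntil u hu).edges := by
        conv_lhs => rw [← q.take_spec hu]
        rw [Walk.edges_append, htake]
        simp [Sym2.eq_swap]
      have hnodup := hq.edges_nodup
      rw [hedges] at hnodup
      have hnot : s(u, x) ∉ (q.dropUntil u hu).edges := (List.nodup_cons.mp hnodup).1
      rw [hdrop, Walk.edges_cons, List.count_cons]
      simp only [beq_iff_eq]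
      by_cases he : e = s(u, x)
      · subst he
        have hoddc : Odd (w'.edges.count s(u, x)) :=
          (hIH _).mpr (by rw [hedges]; exact List.mem_cons_self)
        rw [if_pos rfl]
        rw [Nat.odd_iff] at hoddc
        constructor
        · intro hodd
          rw [Nat.odd_iff] at hodd
          exfalso
          omega
        · intro hmem'
          exact absurd hmem' hnot
      · rw [if_neg (fun hh => he hh.symm), Nat.add_zero, hIH e, hedges, List.mem_cons]
        exact or_iff_right he
    · have hu : u ∉ q.support := by
        intro hu
        have htake : q.takeUntil u hu = Walk.cons h.symm Walk.nil := by
          have := hG.path_unique ⟨q.takeUntil u hu, hq.takeUntil hu⟩ ⟨_, hedge_one⟩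
          exact congrArg Subtype.val this
        have : s(x, u) ∈ q.edges := by
          have hsub := q.edges_takeUntil_subset hu
          rw [htake] at hsub
          exact hsub (by simp)
        rw [Sym2.eq_swap] at this
        exact hmem this
      have hcons : (Walk.cons h q).IsPath := hq.cons hu
      have hpq : p = Walk.cons h q :=
        congrArg Subtype.val (hG.path_unique ⟨p, hp⟩ ⟨_, hcons⟩)
      rw [hpq, Walk.edges_cons, List.count_cons]
      simp only [beq_iff_eq]
      by_cases he : e = s(u, x)
      · subst he
        have hevenc : ¬ Odd (w'.edges.count s(u, x)) := fun hc => hmem ((hIH _).mp hc)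
        rw [if_pos rfl]
        constructor
        · intro _
          exact List.mem_cons_self
        · intro _
          rw [Nat.odd_iff] at hevenc ⊢
          omega
      · rw [if_neg (fun hh => he hh.symm), Nat.add_zero, hIH e, Walk.edges_cons,
          List.mem_cons]
        exact (or_iff_right he).symm

/-- A path in an acyclic graph `G` containing a subtree `Tg` decomposes as
`r ++ q ++ s` where `q` uses only `Tg` edges and `r`, `s` use none. -/
lemma decomp {G Tg : SimpleGraph V} (hG : G.IsAcyclic) (hle : Tg ≤ G)
    (hconn : ∀ u ∈ Tg.support, ∀ v ∈ Tg.support, Tg.Reachable u v) :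
    ∀ {a b : V} (p : G.Walk a b), p.IsPath →
      ∃ (c d : V) (r : G.Walk a c) (q : G.Walk c d) (s : G.Walk d b),
        p = r.append (q.append s) ∧
        (∀ e ∈ r.edges, e ∉ Tg.edgeSet) ∧
        (∀ e ∈ q.edges, e ∈ Tg.edgeSet) ∧
        (∀ e ∈ s.edges, e ∉ Tg.edgeSet) := by
  intro a b p
  induction p with
  | nil => exact fun _ => ⟨_, _, Walk.nil, Walk.nil, Walk.nil, by simp, by simp, by simp, by simp⟩
  | @cons a x b h p' ih =>
    intro hp
    obtain ⟨c, d, r, q, s, hsplit, hr, hq, hs⟩ := ih hp.of_cons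
    by_cases hT : s(a, x) ∈ Tg.edgeSet
    · cases r with
      | nil =>
        refine ⟨a, d, Walk.nil, Walk.cons h q, s, by simp [hsplit], by simp, ?_, hs⟩
        intro e he
        rw [Walk.edges_cons, List.mem_cons] at he
        rcases he with he | he
        · rwa [he]
        · exact hq e he
      | @cons _ y _ h2 r2 =>
        cases q with
        | nil =>
          refine ⟨a, x, Walk.nil, Walk.cons h Walk.nil, p', by simp, by simp, ?_, ?_⟩
          · intro e he
            simp only [Walk.edges_cons, Walk.edges_nil, List.mem_cons,
              List.not_mem_nil, or_false] at he
            rwa [he]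
          · intro e he
            rw [hsplit] at he
            simp only [Walk.edges_append, Walk.edges_nil, List.mem_append,
              List.nil_append, List.append_nil] at he
            rcases he with he | he
            · exact hr e he
            · exact hs e he
        | @cons _ z _ h3 q2 =>
          exfalso
          have hrpath : (Walk.cons h2 r2).IsPath := by
            have hp' := hp.of_cons
            rw [hsplit] at hp'
            exact hp'.of_append_left
          have hx : x ∈ Tg.support :=
            Tg.mem_support.mpr ⟨a, ((Tg.mem_edgeSet).mp hT).symm⟩
          have hc : c ∈ Tg.support := by
            have : s(c, z) ∈ (Walk.cons h3 q2).edges := by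
              rw [Walk.edges_cons]; exact List.mem_cons_self
            exact Tg.mem_support.mpr ⟨_, (Tg.mem_edgeSet).mp (hq _ this)⟩
          obtain ⟨wt⟩ := hconn x hx c hc
          obtain ⟨wp, hwp⟩ := wt.toPath
          have hsubG : ∀ e ∈ wp.edges, e ∈ G.edgeSet :=
            fun e he => edgeSet_mono hle (wp.edges_subset_edgeSet he)
          have hLpath : (wp.transfer G hsubG).IsPath := hwp.transfer hsubG
          have hrl : Walk.cons h2 r2 = wp.transfer G hsubG :=
            congrArg Subtype.val (hG.path_unique ⟨_, hrpath⟩ ⟨_, hLpath⟩)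
          have hfst : s(x, y) ∈ (Walk.cons h2 r2).edges := by
            rw [Walk.edges_cons]; exact List.mem_cons_self
          have h1 : s(x, y) ∈ wp.edges := by
            have := hfst
            rw [hrl, Walk.edges_transfer] at this
            exact this
          exact hr _ hfst (wp.edges_subset_edgeSet h1)
    · refine ⟨c, d, Walk.cons h r, q, s, by rw [hsplit, Walk.cons_append], ?_, hq, hs⟩
      intro e he
      rw [Walk.edges_cons, List.mem_cons] at he
      rcases he with he | he
      · rwa [he]
      · exact hr e he

/-- Let `W₁, …, W_k` be walks on nested trees `T₁ ⊆ ⋯ ⊆ T_k` such that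
for each `i`, every edge of `T_i` is covered once or twice by `W₁ ∪ ⋯ ∪ W_i`. Let `F_i`
be the set of edges of `T_i` covered exactly once by `W₁ ∪ ⋯ ∪ W_i`. Then for every
`1 ≤ i ≤ k − 1` the edge set `E(F_i) ∩ E(W_{i+1})` forms a path. -/
theorem statement9 (k : ℕ) (T : Fin k → SimpleGraph V) (W : Fin k → List V)
    (htree : ∀ i, IsTreeGraph (T i))
    (hmono : ∀ i j : Fin k, i ≤ j → T i ≤ T j)
    (hwalk : ∀ i, W i ≠ [] ∧ (W i).Chain' (T i).Adj)
    (hcover : ∀ i : Fin k, ∀ e ∈ (T i).edgeSet,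
      (∑ j : Fin k, if j ≤ i then walkEdgeCount (W j) e else 0) = 1 ∨
      (∑ j : Fin k, if j ≤ i then walkEdgeCount (W j) e else 0) = 2) :
    ∀ (i : ℕ) (hi : i + 1 < k),
      EdgeSetIsPath
        ({e ∈ (T ⟨i, Nat.lt_of_succ_lt hi⟩).edgeSet |
            (∑ j : Fin k,
              if j ≤ (⟨i, Nat.lt_of_succ_lt hi⟩ : Fin k) then walkEdgeCount (W j) e else 0)
              = 1}
          ∩ listEdges (W ⟨i + 1, hi⟩)) := by
  intro i hi
  set I : Fin k := ⟨i, Nat.lt_of_succ_lt hi⟩ with hI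
  set I1 : Fin k := ⟨i + 1, hi⟩ with hI1
  set S : Set (Sym2 V) :=
    ({e ∈ (T I).edgeSet |
        (∑ j : Fin k, if j ≤ I then walkEdgeCount (W j) e else 0) = 1}
      ∩ listEdges (W I1)) with hS
  obtain ⟨hne, hchain⟩ := hwalk I1
  obtain ⟨a0, l', hl⟩ := List.exists_cons_of_ne_nil hne
  obtain ⟨b0, w, hw⟩ := exists_walk_of_chain (T I1) l' a0 (by rw [← hl]; exact hchain)
  have hacyc := (htree I1).1
  obtain ⟨p, hppath⟩ := w.toPath
  -- counting facts
  have hcnt : ∀ e, walkEdgeCount (W I1) e = w.edges.count e := by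
    intro e
    rw [hl, walkEdgeCount_eq_count]
    simp only [List.tail_cons]
    rw [hw]
  have hodd : ∀ e, Odd (walkEdgeCount (W I1) e) ↔ e ∈ p.edges := by
    intro e
    rw [hcnt]
    exact odd_count_iff_mem_path hacyc w p hppath e
  have hmemList : ∀ e, e ∈ listEdges (W I1) ↔ 0 < walkEdgeCount (W I1) e := by
    intro e
    rw [hcnt, hl, listEdges_eq]
    simp only [Set.mem_setOf_eq, List.tail_cons, hw]
    exact List.count_pos_iff.symm
  -- splitting the sum
  have hII1 : I ≤ I1 := by
    rw [hI, hI1]; exact Fin.mk_le_mk.mpr (Nat.le_succ i)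
  have hsum : ∀ e, (∑ j : Fin k, if j ≤ I1 then walkEdgeCount (W j) e else 0)
      = (∑ j : Fin k, if j ≤ I then walkEdgeCount (W j) e else 0)
        + walkEdgeCount (W I1) e := by
    intro e
    have key : ∀ j : Fin k, (if j ≤ I1 then walkEdgeCount (W j) e else 0)
        = (if j ≤ I then walkEdgeCount (W j) e else 0)
          + (if j = I1 then walkEdgeCount (W j) e else 0) := by
      intro j
      have h1 : j ≤ I1 ↔ (j ≤ I ∨ j = I1) := by
        simp only [hI, hI1, Fin.le_def, Fin.ext_iff]
        omega
      have h2 : ¬(j ≤ I ∧ j = I1) := by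
        simp only [hI, hI1, Fin.le_def, Fin.ext_iff]
        omega
      by_cases hA : j ≤ I
      · by_cases hB : j = I1
        · exact absurd ⟨hA, hB⟩ h2
        · simp [h1.mpr (Or.inl hA), hA, hB]
      · by_cases hB : j = I1
        · subst hB
          simp [h1.mpr (Or.inr rfl), hA]
        · have hno : ¬ j ≤ I1 := fun hc => (h1.mp hc).elim hA hB
          simp [hno, hA, hB]
    rw [Finset.sum_congr rfl fun j _ => key j, Finset.sum_add_distrib,
      Finset.sum_ite_eq' Finset.univ I1 (fun j => walkEdgeCount (W j) e)]
    simp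
  -- S is the set of T I edges on the path p
  have hSeq : S = {e | e ∈ p.edges ∧ e ∈ (T I).edgeSet} := by
    ext e
    constructor
    · rintro ⟨⟨he1, he2⟩, he3⟩
      have hpos := (hmemList e).mp he3
      have hcov := hcover I1 e (edgeSet_mono (hmono I I1 hII1) he1)
      rw [hsum e, he2] at hcov
      have : walkEdgeCount (W I1) e = 1 := by omega
      exact ⟨(hodd e).mp (by rw [this]; exact odd_one), he1⟩
    · rintro ⟨hep, heT⟩
      have hoddc := (hodd e).mpr hep
      have hpos : 0 < walkEdgeCount (W I1) e := hoddc.pos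
      have hcov1 := hcover I e heT
      have hcov2 := hcover I1 e (edgeSet_mono (hmono I I1 hII1) heT)
      rw [hsum e] at hcov2
      refine ⟨⟨heT, by omega⟩, (hmemList e).mpr hpos⟩
  -- decompose p
  obtain ⟨c, d, r, q, s, hsplit, hr, hq, hs⟩ :=
    decomp hacyc (hmono I I1 hII1) (htree I).2 p hppath
  have hSq : S = {e | e ∈ q.edges} := by
    rw [hSeq]
    ext e
    simp only [Set.mem_setOf_eq]
    constructor
    · rintro ⟨hep, heT⟩
      rw [hsplit] at hep
      simp only [Walk.edges_append, List.mem_append] at hep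
      rcases hep with hep | hep | hep
      · exact absurd heT (hr e hep)
      · exact hep
      · exact absurd heT (hs e hep)
    · intro heq
      refine ⟨?_, hq e heq⟩
      rw [hsplit]
      simp only [Walk.edges_append, List.mem_append]
      exact Or.inr (Or.inl heq)
  have hqpath : q.IsPath := by
    rw [hsplit] at hppath
    exact hppath.of_append_right.of_append_left
  have hsubS : ∀ e ∈ q.edges, e ∈ (SimpleGraph.fromEdgeSet S).edgeSet := by
    intro e he
    rw [edgeSet_fromEdgeSet]
    refine ⟨by rw [hSq]; exact he, ?_⟩
    exact (T I1).not_isDiag_of_mem_edgeSet (q.edges_subset_edgeSet he)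
  refine ⟨c, d, q.transfer _ hsubS, hqpath.transfer hsubS, ?_⟩
  rw [Walk.edges_transfer]
  exact hSq

end WSat
end

section
/- Suppose that A is an activation process and that A_1, A_2 ⊆ A are subprocesses activating cycles C_1 and C_2, respectively. Moreover, suppose that C_1 ∩ C_2 is a path, and that C_1 and C_2 are contractible in K(A_1) and K(A_2), respectively. Then the cycle C_1 △ C_2 (symmetric difference of edge sets) is contractible in K(A_1 ∪ A_2). -/
namespace WSat

variable {V : Type} [Fintype V] [DecidableEq V]

/-- `(H'; steps')` is a subprocess of the activation process `(H; steps)`: its triangles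
form a subsequence of the triangles of `(H; steps)`, each activating the same edge, and the
initial graph `H'` lies in `K⁽¹⁾(A)`. -/
def Subprocess (H' : SimpleGraph V) (steps' : List (V × V × V))
    (H : SimpleGraph V) (steps : List (V × V × V)) : Prop :=
  IsValidProcess H' steps' ∧ H' ≤ afterGraph H steps ∧ steps'.Sublist steps

/-- The triangular faces of the activation complex `K(A)` of a process with steps
`steps`. -/
def facesOf (steps : List (V × V × V)) (a b c : V) : Prop :=
  ∃ st ∈ steps, ({a, b, c} : Set V) = {st.1, st.2.1, st.2.2}

/-- The graph `C` is a cycle which is contractible in the 2-dimensional complex with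
1-skeleton `skel` and triangular faces `F`. -/
def CycContractible (skel : SimpleGraph V) (F : V → V → V → Prop) (C : SimpleGraph V) : Prop :=
  ∃ (x : V) (w : skel.Walk x x), w.IsCycle ∧ C.edgeSet = {e | e ∈ w.edges} ∧
    NullHomotopic skel F w.support x


section Lemmas

open Relation SimpleGraph

variable {G G' : SimpleGraph V} {F F' : V → V → V → Prop}

lemma EqvGen.map {α β : Type*} {r : α → α → Prop} {r' : β → β → Prop} (f : α → β)
    (h : ∀ a b, r a b → r' (f a) (f b)) {a b : α} (H : EqvGen r a b) :
    EqvGen r' (f a) (f b) := by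
  induction H with
  | rel _ _ hr => exact .rel _ _ (h _ _ hr)
  | refl _ => exact .refl _
  | symm _ _ _ ih => exact ih.symm _ _
  | trans _ _ _ _ _ ih1 ih2 => exact ih1.trans _ _ _ ih2

lemma HStep.mono (hG : G ≤ G') (hF : ∀ a b c, F a b c → F' a b c) {l l' : List V}
    (h : HStep G F l l') : HStep G' F' l l' := by
  cases h with
  | back l₁ l₂ a b h => exact .back l₁ l₂ a b (hG h)
  | tri l₁ l₂ a b c h => exact .tri l₁ l₂ a b c (hF _ _ _ h)

lemma EqvGen.hmono (hG : G ≤ G') (hF : ∀ a b c, F a b c → F' a b c) {l l' : List V}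
    (h : EqvGen (HStep G F) l l') : EqvGen (HStep G' F') l l' :=
  EqvGen.map id (fun _ _ h => h.mono hG hF) h

lemma HStep.congr (p q : List V) {l l' : List V} (h : HStep G F l l') :
    HStep G F (p ++ l ++ q) (p ++ l' ++ q) := by
  cases h with
  | back l₁ l₂ a b h =>
      have := HStep.back (F := F) (p ++ l₁) (l₂ ++ q) a b h
      simpa using this
  | tri l₁ l₂ a b c h =>
      have := HStep.tri (G := G) (p ++ l₁) (l₂ ++ q) a b c h
      simpa using this

lemma EqvGen.hcongr (p q : List V) {l l' : List V} (h : EqvGen (HStep G F) l l') :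
    EqvGen (HStep G F) (p ++ l ++ q) (p ++ l' ++ q) :=
  EqvGen.map (fun m => p ++ m ++ q) (fun _ _ h => h.congr p q) h

lemma HStep.rev (hF : ∀ a b c, F a b c → F b a c) {l l' : List V} (h : HStep G F l l') :
    HStep G F l.reverse l'.reverse := by
  cases h with
  | back l₁ l₂ a b h =>
      have := HStep.back (F := F) l₂.reverse l₁.reverse a b h
      simpa using this
  | tri l₁ l₂ a b c h =>
      have := HStep.tri (G := G) l₂.reverse l₁.reverse b a c (hF _ _ _ h)
      simpa using this

lemma EqvGen.hrev (hF : ∀ a b c, F a b c → F b a c) {l l' : List V}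
    (h : EqvGen (HStep G F) l l') : EqvGen (HStep G F) l.reverse l'.reverse :=
  EqvGen.map List.reverse (fun _ _ h => h.rev hF) h

/-- Inserting the backtrack `W · W⁻¹` at an occurrence of the vertex `x`. -/
lemma insert_backtrack {x y : V} (W : G.Walk x y) (l₁ l₂ : List V) :
    EqvGen (HStep G F) (l₁ ++ x :: l₂)
      (l₁ ++ W.support ++ W.reverse.support.tail ++ l₂) := by
  induction W generalizing l₁ l₂ with
  | nil => simp; exact .refl _
  | @cons x z y h W ih =>
      refine .trans _ _ _ (.rel _ _ (HStep.back l₁ l₂ x z h)) ?_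
      have := ih (l₁ ++ [x]) (x :: l₂)
      have e1 : l₁ ++ [x] ++ z :: x :: l₂ = l₁ ++ x :: z :: x :: l₂ := by simp
      have e2 : l₁ ++ [x] ++ W.support ++ W.reverse.support.tail ++ x :: l₂ =
          l₁ ++ (SimpleGraph.Walk.cons h W).support ++
            (SimpleGraph.Walk.cons h W).reverse.support.tail ++ l₂ := by
        rw [SimpleGraph.Walk.support_cons, SimpleGraph.Walk.reverse_cons,
          SimpleGraph.Walk.support_append,
          List.tail_append_of_ne_nil (SimpleGraph.Walk.support_ne_nil _)]
        simp
      rw [e1, e2] at this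
      exact this

lemma support_dropLast_append {a b : V} (W : G.Walk a b) :
    W.support.dropLast ++ [b] = W.support := by
  conv_rhs => rw [← List.dropLast_append_getLast (Walk.support_ne_nil W)]
  rw [Walk.getLast_support]

lemma loop_rotate {x u : V} (s : G.Walk x u) (t : G.Walk u x)
    (K : EqvGen (HStep G F) ((s.append t).support) [x]) :
    EqvGen (HStep G F) ((t.append s).support) [u] := by
  cases s with
  | nil => simpa using K
  | @cons _ z _ h s' =>
    set B := t.support with hB
    set D := s'.support.dropLast with hDdef
    have hD : s'.support = D ++ [u] := (support_dropLast_append s').symm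
    have hBx : B.dropLast ++ [x] = B := support_dropLast_append t
    have hBu : B = u :: B.tail := t.support_eq_cons
    have e_goal : (t.append (Walk.cons h s')).support = (B ++ D) ++ [u] := by
      rw [Walk.support_append, Walk.support_cons, List.tail_cons, hD, List.append_assoc]
    rw [e_goal]
    have st1 := insert_backtrack (F := F) t (B ++ D) ([] : List V)
    have e1 : (B ++ D) ++ u :: [] = (B ++ D) ++ [u] := rfl
    have e2 : B ++ D ++ t.support ++ t.reverse.support.tail ++ [] =
        B.dropLast ++ ((Walk.cons h s').append t).support ++ B.reverse.tail := by
      rw [Walk.support_append, Walk.support_cons, Walk.support_reverse, List.append_nil, hD]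
      calc B ++ D ++ B ++ B.reverse.tail
          = (B.dropLast ++ [x]) ++ D ++ (u :: B.tail) ++ B.reverse.tail := by rw [hBx, ← hBu]
        _ = B.dropLast ++ (x :: (D ++ [u] ++ B.tail)) ++ B.reverse.tail := by simp
        _ = B.dropLast ++ (x :: (D ++ [u]) ++ B.tail) ++ B.reverse.tail := by simp
    rw [e1, e2] at st1
    have st2 := EqvGen.hcongr B.dropLast B.reverse.tail K
    have st3 := (insert_backtrack (F := F) t ([] : List V) ([] : List V)).symm _ _
    have e3 : B.dropLast ++ [x] ++ B.reverse.tail =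
        [] ++ t.support ++ t.reverse.support.tail ++ [] := by
      rw [Walk.support_reverse, List.append_nil, List.nil_append, hBx]
    rw [e3] at st2
    have e4 : ([] : List V) ++ u :: [] = [u] := rfl
    rw [e4] at st3
    exact (st1.trans _ _ _ st2).trans _ _ _ st3

lemma IsCycle.rev {v : V} {p : G.Walk v v} (hp : p.IsCycle) : p.reverse.IsCycle := by
  cases p with
  | nil => exact absurd hp.not_nil (by simp)
  | @cons _ z _ h q =>
    rw [Walk.isCycle_def] at hp ⊢
    refine ⟨hp.1.reverse, ?_, ?_⟩
    · intro hnil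
      have := congrArg Walk.length hnil
      simp at this
    · have hq : q.support.dropLast ++ [v] = q.support := support_dropLast_append q
      have ht : q.support.Nodup := by
        have := hp.2.2; rwa [Walk.support_cons, List.tail_cons] at this
      rw [← hq, List.nodup_append'] at ht
      rw [Walk.support_reverse, Walk.support_cons, ← hq]
      simp only [List.reverse_cons, List.reverse_append, List.reverse_nil,
        List.nil_append, List.singleton_append, List.cons_append, List.tail_cons]
      rw [List.nodup_append']
      refine ⟨List.nodup_reverse.mpr ht.1, List.nodup_singleton _, ?_⟩
      intro x hx hx'
      exact ht.2.2 (List.mem_reverse.mp hx) hx'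

/-- In a path, an edge containing the initial vertex must be the first edge. -/
lemma first_edge {x y : V} (W : G.Walk x y) (hW : W.IsPath) {e : Sym2 V}
    (he : e ∈ W.edges) (hx : x ∈ e) :
    ∃ (a : V) (h : G.Adj x a) (W' : G.Walk a y), W = Walk.cons h W' ∧ e = s(x, a) := by
  cases W with
  | nil => simp at he
  | @cons _ a _ h W' =>
    refine ⟨a, h, W', rfl, ?_⟩
    rw [Walk.edges_cons, List.mem_cons] at he
    rcases he with he | he
    · exact he
    · exfalso
      obtain ⟨b, rfl⟩ := Sym2.mem_iff_exists.mp hx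
      exact ((Walk.cons_isPath_iff h W').mp hW).2 (W'.fst_mem_support_of_mem_edges he)

/-- In a path, an edge containing the final vertex must be the last edge. -/
lemma last_edge {x y : V} (W : G.Walk x y) (hW : W.IsPath) {e : Sym2 V}
    (he : e ∈ W.edges) (hy : y ∈ e) :
    ∃ (c : V) (h : G.Adj c y) (W' : G.Walk x c), W = W'.concat h ∧ e = s(c, y) := by
  obtain ⟨a, h, W', hrev, hee⟩ := first_edge W.reverse hW.reverse
    (by rwa [Walk.edges_reverse, List.mem_reverse]) hy
  refine ⟨a, h.symm, W'.reverse, ?_, by rw [hee, Sym2.eq_swap]⟩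
  have := congrArg Walk.reverse hrev
  rwa [Walk.reverse_reverse, Walk.reverse_cons] at this

/-- A path all whose edges lie on another path from the same vertex is an initial
segment of it. -/
lemma path_prefix {x v : V} (P : G.Walk x v) (hP : P.IsPath) :
    ∀ {y : V} (W : G.Walk x y), W.IsPath → (∀ e ∈ P.edges, e ∈ W.edges) →
      ∃ Q : G.Walk v y, W = P.append Q := by
  induction P with
  | nil => exact fun W _ _ => ⟨W, by simp⟩
  | @cons x₀ b v₀ hxb P' ih =>
    intro y W hW hsub
    obtain ⟨a, h, W', rfl, he⟩ := first_edge W hW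
      (hsub s(x₀, b) (by simp)) (by simp)
    obtain rfl : b = a := Sym2.congr_right.mp he
    have hxP' : x₀ ∉ P'.support := ((Walk.cons_isPath_iff _ _).mp hP).2
    have hsub' : ∀ e ∈ P'.edges, e ∈ W'.edges := by
      intro e heP'
      have h2 := hsub e (by simp [heP'])
      rw [Walk.edges_cons, List.mem_cons] at h2
      rcases h2 with rfl | h'
      · exact absurd (P'.fst_mem_support_of_mem_edges heP') hxP'
      · exact h'
    obtain ⟨Q, rfl⟩ := ih hP.of_cons W' hW.of_cons hsub'
    exact ⟨Q, rfl⟩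

lemma cycle_cons_prefix {u a v : V} (hua : G.Adj u a) (w' : G.Walk a u) (hw' : w'.IsPath)
    (hub : G.Adj u a) (P' : G.Walk a v) (hP : (Walk.cons hub P').IsPath)
    (hsub : ∀ e ∈ (Walk.cons hub P').edges, e ∈ (Walk.cons hua w').edges) :
    ∃ Q : G.Walk v u, Walk.cons hua w' = (Walk.cons hub P').append Q := by
  have hxP' : u ∉ P'.support := ((Walk.cons_isPath_iff _ _).mp hP).2
  have hsub' : ∀ e ∈ P'.edges, e ∈ w'.edges := by
    intro e heP'
    have h2 := hsub e (by simp [heP'])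
    rw [Walk.edges_cons, List.mem_cons] at h2
    rcases h2 with rfl | h'
    · exact absurd (P'.fst_mem_support_of_mem_edges heP') hxP'
    · exact h'
  obtain ⟨Q, rfl⟩ := path_prefix P' hP.of_cons w' hw' hsub'
  exact ⟨Q, rfl⟩

/-- A cycle containing all edges of a nontrivial path starting at its basepoint
begins with that path, up to reversal of the cycle. -/
lemma cycle_split {u v : V} (w : G.Walk u u) (hw : w.IsCycle)
    (P : G.Walk u v) (hP : P.IsPath) (hPn : ¬ P.Nil)
    (hsub : ∀ e ∈ P.edges, e ∈ w.edges) :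
    (∃ Q : G.Walk v u, w = P.append Q) ∨ (∃ Q : G.Walk v u, w.reverse = P.append Q) := by
  cases P with
  | nil => simp at hPn
  | @cons _ b _ hub P' =>
    cases w with
    | nil => exact absurd hw.not_nil (by simp)
    | @cons _ a _ hua w' =>
      have hw' : w'.IsPath := ((Walk.cons_isCycle_iff w' hua).mp hw).1
      have he : s(u, b) ∈ (Walk.cons hua w').edges := hsub _ (by simp)
      rw [Walk.edges_cons, List.mem_cons] at he
      rcases he with he | he
      · obtain rfl : b = a := Sym2.congr_right.mp he
        exact Or.inl (cycle_cons_prefix hua w' hw' hub P' hP hsub)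
      · obtain ⟨c, hc, W₂, rfl, hee⟩ := last_edge w' hw' he (by simp)
        obtain rfl : b = c := by
          rcases Sym2.eq_iff.mp hee with ⟨_, h2⟩ | ⟨_, h2⟩
          · exact absurd h2 hub.ne'
          · exact h2
        right
        have hrev : (Walk.cons hua (W₂.concat hc)).reverse =
            Walk.cons hc.symm (W₂.reverse.concat hua.symm) := by
          rw [Walk.reverse_cons, Walk.reverse_concat, Walk.concat_eq_append,
            Walk.cons_append]
        have hrevcyc : (Walk.cons hc.symm (W₂.reverse.concat hua.symm)).IsCycle := by
          rw [← hrev]; exact IsCycle.rev hw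
        have hrw' : (W₂.reverse.concat hua.symm).IsPath :=
          ((Walk.cons_isCycle_iff _ _).mp hrevcyc).1
        have hsubr : ∀ e ∈ (Walk.cons hub P').edges,
            e ∈ (Walk.cons hc.symm (W₂.reverse.concat hua.symm)).edges := by
          intro e heP
          rw [← hrev, Walk.edges_reverse, List.mem_reverse]
          exact hsub e heP
        obtain ⟨Q, hQ⟩ := cycle_cons_prefix hc.symm (W₂.reverse.concat hua.symm) hrw'
          hub P' hP hsubr
        exact ⟨Q, by rw [hrev, hQ]⟩

/-- Every vertex of a non-nil walk lies on one of its edges. -/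
lemma mem_edge_of_mem_support {x y z : V} (W : G.Walk x y) (hW : ¬ W.Nil)
    (hz : z ∈ W.support) : ∃ e ∈ W.edges, z ∈ e := by
  induction W with
  | nil => simp at hW
  | @cons a b c h W ih =>
    rw [Walk.support_cons, List.mem_cons] at hz
    rcases hz with rfl | hz
    · exact ⟨s(z, b), by simp, by simp⟩
    · by_cases hn : W.Nil
      · cases W with
        | nil =>
          rw [Walk.support_nil, List.mem_singleton] at hz
          subst hz
          exact ⟨s(a, z), by simp, by simp⟩
        | cons h' W' => exact absurd hn Walk.not_nil_cons
      · obtain ⟨e, he, hze⟩ := ih hn hz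
        exact ⟨e, by simp [he], hze⟩

/-- Main per-side lemma: a contractible cycle graph containing the path `P` can be
realized as `P.append Q` for a null-homotopic cycle walk based at the start of `P`. -/
lemma side {Ci : SimpleGraph V} (hFsym : ∀ a b c, F a b c → F b a c)
    (hcon : CycContractible G F Ci) {u v : V} (P : G.Walk u v) (hP : P.IsPath)
    (hPn : ¬ P.Nil) (hPE : ∀ e ∈ P.edges, e ∈ Ci.edgeSet) :
    ∃ Q : G.Walk v u, (P.append Q).IsCycle ∧
      Ci.edgeSet = {e | e ∈ (P.append Q).edges} ∧
      NullHomotopic G F (P.append Q).support u := by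
  obtain ⟨x, w, hcyc, hE, hNH⟩ := hcon
  have hu : u ∈ w.support := by
    obtain ⟨e, heP, hue⟩ := mem_edge_of_mem_support P hPn P.start_mem_support
    have hew : e ∈ w.edges := by have := hPE e heP; rwa [hE] at this
    obtain ⟨y, rfl⟩ := Sym2.mem_iff_exists.mp hue
    exact w.fst_mem_support_of_mem_edges hew
  set r : G.Walk u u := w.rotate u hu with hr
  have hrcyc : r.IsCycle := hcyc.rotate hu
  have hrE : Ci.edgeSet = {e | e ∈ r.edges} := by
    rw [hE]
    ext e
    exact (List.IsRotated.mem_iff (w.rotate_edges u hu)).symm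
  have K : EqvGen (HStep G F) (((w.takeUntil u hu).append (w.dropUntil u hu)).support) [x] := by
    rw [Walk.take_spec w hu]; exact hNH
  have hrNH : EqvGen (HStep G F) r.support [u] := by
    have h2 := loop_rotate (w.takeUntil u hu) (w.dropUntil u hu) K
    rw [hr]; unfold Walk.rotate; exact h2
  have hsubw : ∀ e ∈ P.edges, e ∈ r.edges := fun e he => by
    have h3 := hPE e he; rwa [hrE] at h3
  rcases cycle_split r hrcyc P hP hPn hsubw with ⟨Q, hQ⟩ | ⟨Q, hQ⟩
  · exact ⟨Q, hQ ▸ hrcyc, hQ ▸ hrE, hQ ▸ hrNH⟩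
  · refine ⟨Q, hQ ▸ IsCycle.rev hrcyc, ?_, ?_⟩
    · rw [← hQ, Walk.edges_reverse, hrE]
      ext e
      simp
    · show EqvGen (HStep G F) _ [u]
      rw [← hQ, Walk.support_reverse]
      have h4 := EqvGen.hrev hFsym hrNH
      simpa using h4

lemma facesOf_symm (steps : List (V × V × V)) :
    ∀ a b c, facesOf steps a b c → facesOf steps b a c := by
  rintro a b c ⟨st, hst, h⟩
  exact ⟨st, hst, by rw [Set.insert_comm, h]⟩

end Lemmas

/-- If `A₁, A₂ ⊆ A` are subprocesses activating cycles `C₁, C₂`, the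
intersection `C₁ ∩ C₂` is a path, and `C₁, C₂` are contractible in `K(A₁), K(A₂)`
respectively, then the cycle `C₁ △ C₂` is contractible in
`K(A₁ ∪ A₂)` (whose 1-skeleton is `K⁽¹⁾(A₁) ∪ K⁽¹⁾(A₂)` and whose faces are the faces
of `A₁` together with those of `A₂`). -/
theorem statement15 (H H₁ H₂ : SimpleGraph V)
    (steps steps₁ steps₂ : List (V × V × V))
    (hA : IsValidProcess H steps)
    (hA₁ : Subprocess H₁ steps₁ H steps) (hA₂ : Subprocess H₂ steps₂ H steps)
    (C₁ C₂ : SimpleGraph V)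
    (hC₁ : C₁ ≤ afterGraph H₁ steps₁) (hC₂ : C₂ ≤ afterGraph H₂ steps₂)
    (hpath : ∃ (u v : V) (pw : (C₁ ⊓ C₂).Walk u v), pw.IsPath ∧ 0 < pw.length ∧
      (C₁ ⊓ C₂).edgeSet = {e | e ∈ pw.edges} ∧
      C₁.support ∩ C₂.support = {z | z ∈ pw.support})
    (hcon₁ : CycContractible (afterGraph H₁ steps₁) (facesOf steps₁) C₁)
    (hcon₂ : CycContractible (afterGraph H₂ steps₂) (facesOf steps₂) C₂) :
    CycContractible (afterGraph H₁ steps₁ ⊔ afterGraph H₂ steps₂)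
      (fun a b c => facesOf steps₁ a b c ∨ facesOf steps₂ a b c)
      (SimpleGraph.fromEdgeSet (symmDiff C₁.edgeSet C₂.edgeSet)) := by
  classical
  obtain ⟨u, v, pw, hpwP, hpwlen, hpwE, hpwS⟩ := hpath
  set G₁ := afterGraph H₁ steps₁ with hG₁
  set G₂ := afterGraph H₂ steps₂ with hG₂
  have hF1s := facesOf_symm (V := V) steps₁
  have hF2s := facesOf_symm (V := V) steps₂
  have hFus : ∀ a b c, (facesOf steps₁ a b c ∨ facesOf steps₂ a b c) →
      (facesOf steps₁ b a c ∨ facesOf steps₂ b a c) :=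
    fun a b c h => h.imp (hF1s a b c) (hF2s a b c)
  have hne : u ≠ v := by
    intro h
    subst h
    cases pw with
    | nil => simp at hpwlen
    | cons h' p' =>
        exact ((SimpleGraph.Walk.cons_isPath_iff _ _).mp hpwP).2 p'.end_mem_support
  have hpwn : ¬ pw.Nil := by
    rw [SimpleGraph.Walk.nil_iff_length_eq]; omega
  have hpwE' : ∀ e ∈ pw.edges, e ∈ (C₁ ⊓ C₂).edgeSet :=
    fun e he => pw.edges_subset_edgeSet he
  have hle₁ : C₁ ⊓ C₂ ≤ G₁ := le_trans inf_le_left hC₁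
  have hle₂ : C₁ ⊓ C₂ ≤ G₂ := le_trans inf_le_right hC₂
  set P₁ := pw.transfer G₁ (fun e he => SimpleGraph.edgeSet_mono hle₁ (hpwE' e he)) with hP₁def
  set P₂ := pw.transfer G₂ (fun e he => SimpleGraph.edgeSet_mono hle₂ (hpwE' e he)) with hP₂def
  have hP₁edges : P₁.edges = pw.edges := pw.edges_transfer _
  have hP₂edges : P₂.edges = pw.edges := pw.edges_transfer _
  have hP₁sup : P₁.support = pw.support := pw.support_transfer _
  have hP₂sup : P₂.support = pw.support := pw.support_transfer _
  have hP₁P : P₁.IsPath := hpwP.transfer _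
  have hP₂P : P₂.IsPath := hpwP.transfer _
  have hP₁n : ¬ P₁.Nil := by
    rw [SimpleGraph.Walk.nil_iff_length_eq, SimpleGraph.Walk.length_transfer]; omega
  have hP₂n : ¬ P₂.Nil := by
    rw [SimpleGraph.Walk.nil_iff_length_eq, SimpleGraph.Walk.length_transfer]; omega
  have hP₁E : ∀ e ∈ P₁.edges, e ∈ C₁.edgeSet := by
    intro e he
    rw [hP₁edges] at he
    have := hpwE' e he
    rw [SimpleGraph.edgeSet_inf] at this
    exact this.1
  have hP₂E : ∀ e ∈ P₂.edges, e ∈ C₂.edgeSet := by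
    intro e he
    rw [hP₂edges] at he
    have := hpwE' e he
    rw [SimpleGraph.edgeSet_inf] at this
    exact this.2
  obtain ⟨Q₁, hcyc₁, hE₁, hNH₁⟩ := side hF1s hcon₁ P₁ hP₁P hP₁n hP₁E
  obtain ⟨Q₂, hcyc₂, hE₂, hNH₂⟩ := side hF2s hcon₂ P₂ hP₂P hP₂n hP₂E
  -- basic facts about the two side walks
  have hinf : ∀ e, e ∈ C₁.edgeSet → e ∈ C₂.edgeSet → e ∈ pw.edges := by
    intro e h1 h2
    have : e ∈ (C₁ ⊓ C₂).edgeSet := by rw [SimpleGraph.edgeSet_inf]; exact ⟨h1, h2⟩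
    rwa [hpwE] at this
  have hnd₁ : (P₁.edges ++ Q₁.edges).Nodup := by
    rw [← SimpleGraph.Walk.edges_append]; exact hcyc₁.edges_nodup
  have hnd₂ : (P₂.edges ++ Q₂.edges).Nodup := by
    rw [← SimpleGraph.Walk.edges_append]; exact hcyc₂.edges_nodup
  have dPQ₁ : ∀ e, e ∈ P₁.edges → e ∈ Q₁.edges → False := by
    intro e h1 h2; exact (List.nodup_append'.mp hnd₁).2.2 h1 h2
  have dPQ₂ : ∀ e, e ∈ P₂.edges → e ∈ Q₂.edges → False := by
    intro e h1 h2; exact (List.nodup_append'.mp hnd₂).2.2 h1 h2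
  have hQ₁E : ∀ e ∈ Q₁.edges, e ∈ C₁.edgeSet := by
    intro e he
    rw [hE₁]
    show e ∈ (P₁.append Q₁).edges
    rw [SimpleGraph.Walk.edges_append, List.mem_append]
    exact Or.inr he
  have hQ₂E : ∀ e ∈ Q₂.edges, e ∈ C₂.edgeSet := by
    intro e he
    rw [hE₂]
    show e ∈ (P₂.append Q₂).edges
    rw [SimpleGraph.Walk.edges_append, List.mem_append]
    exact Or.inr he
  have hQ₁nE₂ : ∀ e ∈ Q₁.edges, e ∉ C₂.edgeSet := by
    intro e he h2
    exact dPQ₁ e (by rw [hP₁edges]; exact hinf e (hQ₁E e he) h2) he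
  have hQ₂nE₁ : ∀ e ∈ Q₂.edges, e ∉ C₁.edgeSet := by
    intro e he h1
    exact dPQ₂ e (by rw [hP₂edges]; exact hinf e h1 (hQ₂E e he)) he
  -- support decompositions of the two cycles
  have hnds₁ : (P₁.support.tail ++ Q₁.support.tail).Nodup := by
    rw [← SimpleGraph.Walk.tail_support_append]; exact hcyc₁.2
  have hnds₂ : (P₂.support.tail ++ Q₂.support.tail).Nodup := by
    rw [← SimpleGraph.Walk.tail_support_append]; exact hcyc₂.2
  have dTS₁ : ∀ z, z ∈ P₁.support.tail → z ∈ Q₁.support.tail → False := by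
    intro z h1 h2; exact (List.nodup_append'.mp hnds₁).2.2 h1 h2
  have dTS₂ : ∀ z, z ∈ P₂.support.tail → z ∈ Q₂.support.tail → False := by
    intro z h1 h2; exact (List.nodup_append'.mp hnds₂).2.2 h1 h2
  have hvT₁ : v ∈ P₁.support.tail := by
    have hv : v ∈ P₁.support := P₁.end_mem_support
    rw [P₁.support_eq_cons, List.mem_cons] at hv
    rcases hv with rfl | hv
    · exact absurd rfl hne
    · exact hv
  have hvT₂ : v ∈ P₂.support.tail := by
    have hv : v ∈ P₂.support := P₂.end_mem_support
    rw [P₂.support_eq_cons, List.mem_cons] at hv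
    rcases hv with rfl | hv
    · exact absurd rfl hne
    · exact hv
  have hQ₁path : Q₁.IsPath := by
    rw [SimpleGraph.Walk.isPath_def, Q₁.support_eq_cons, List.nodup_cons]
    exact ⟨fun hv => dTS₁ v hvT₁ hv, (List.nodup_append'.mp hnds₁).2.1⟩
  have hQ₂path : Q₂.IsPath := by
    rw [SimpleGraph.Walk.isPath_def, Q₂.support_eq_cons, List.nodup_cons]
    exact ⟨fun hv => dTS₂ v hvT₂ hv, (List.nodup_append'.mp hnds₂).2.1⟩
  have hQ₁n : ¬ Q₁.Nil := SimpleGraph.Walk.not_nil_of_ne (Ne.symm hne)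
  have hQ₂n : ¬ Q₂.Nil := SimpleGraph.Walk.not_nil_of_ne (Ne.symm hne)
  -- supports lie on the cycles
  have hQ₁C : ∀ z ∈ Q₁.support, z ∈ C₁.support := by
    intro z hz
    obtain ⟨e, he, hze⟩ := mem_edge_of_mem_support Q₁ hQ₁n hz
    have heC := hQ₁E e he
    obtain ⟨y, rfl⟩ := Sym2.mem_iff_exists.mp hze
    exact ⟨y, heC⟩
  have hQ₂C : ∀ z ∈ Q₂.support, z ∈ C₂.support := by
    intro z hz
    obtain ⟨e, he, hze⟩ := mem_edge_of_mem_support Q₂ hQ₂n hz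
    have heC := hQ₂E e he
    obtain ⟨y, rfl⟩ := Sym2.mem_iff_exists.mp hze
    exact ⟨y, heC⟩
  have hArev : Q₁.support.reverse = u :: Q₁.support.reverse.tail := by
    have := Q₁.reverse.support_eq_cons
    rwa [SimpleGraph.Walk.support_reverse] at this
  have hu_nin : u ∉ Q₁.support.reverse.tail := by
    have hnd : Q₁.support.reverse.Nodup := List.nodup_reverse.mpr hQ₁path.support_nodup
    rw [hArev, List.nodup_cons] at hnd
    exact hnd.1
  have hv_nin : v ∉ Q₂.support.tail := by
    have hnd := hQ₂path.support_nodup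
    rw [Q₂.support_eq_cons, List.nodup_cons] at hnd
    exact hnd.1
  have hdisj : ∀ z, z ∈ Q₁.support.reverse.tail → z ∈ Q₂.support.tail → False := by
    intro z h1 h2
    have hz1 : z ∈ Q₁.support := by
      rw [← List.mem_reverse]; exact List.mem_of_mem_tail h1
    have hzu : z ≠ u := fun h => hu_nin (h ▸ h1)
    have hz2 : z ∈ Q₂.support := List.mem_of_mem_tail h2
    have hzv : z ≠ v := fun h => hv_nin (h ▸ h2)
    have hzC : z ∈ C₁.support ∩ C₂.support := ⟨hQ₁C z hz1, hQ₂C z hz2⟩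
    rw [hpwS] at hzC
    have hzP : z ∈ P₁.support := by rw [hP₁sup]; exact hzC
    rw [P₁.support_eq_cons, List.mem_cons] at hzP
    rcases hzP with rfl | hzP
    · exact hzu rfl
    · rw [Q₁.support_eq_cons, List.mem_cons] at hz1
      rcases hz1 with rfl | hz1
      · exact hzv rfl
      · exact dTS₁ z hzP hz1
  -- the combined walk
  set Gu := G₁ ⊔ G₂ with hGu
  have hQ₁'sub : ∀ e ∈ Q₁.edges, e ∈ Gu.edgeSet :=
    fun e he => SimpleGraph.edgeSet_mono le_sup_left (Q₁.edges_subset_edgeSet he)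
  have hQ₂'sub : ∀ e ∈ Q₂.edges, e ∈ Gu.edgeSet :=
    fun e he => SimpleGraph.edgeSet_mono le_sup_right (Q₂.edges_subset_edgeSet he)
  have hP₁'sub : ∀ e ∈ P₁.edges, e ∈ Gu.edgeSet :=
    fun e he => SimpleGraph.edgeSet_mono le_sup_left (P₁.edges_subset_edgeSet he)
  set Q₁' := Q₁.transfer Gu hQ₁'sub with hQ₁'def
  set Q₂' := Q₂.transfer Gu hQ₂'sub with hQ₂'def
  set P' := P₁.transfer Gu hP₁'sub with hP'def
  set Wc := Q₁'.reverse.append Q₂' with hWcdef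
  have hWsup : Wc.support = Q₁.support.reverse ++ Q₂.support.tail := by
    rw [hWcdef, SimpleGraph.Walk.support_append, SimpleGraph.Walk.support_reverse,
      SimpleGraph.Walk.support_transfer, SimpleGraph.Walk.support_transfer]
  -- Wc is a cycle
  have hWccyc : Wc.IsCycle := by
    rw [SimpleGraph.Walk.isCycle_def]
    refine ⟨?_, ?_, ?_⟩
    · rw [SimpleGraph.Walk.isTrail_def, SimpleGraph.Walk.edges_append,
        SimpleGraph.Walk.edges_reverse, SimpleGraph.Walk.edges_transfer,
        SimpleGraph.Walk.edges_transfer, List.nodup_append']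
      refine ⟨List.nodup_reverse.mpr hQ₁path.edges_nodup, hQ₂path.edges_nodup, ?_⟩
      intro e he1 he2
      rw [List.mem_reverse] at he1
      exact hQ₁nE₂ e he1 (hQ₂E e he2)
    · intro h
      have := congrArg SimpleGraph.Walk.length h
      rw [SimpleGraph.Walk.length_append, SimpleGraph.Walk.length_nil,
        SimpleGraph.Walk.length_reverse, SimpleGraph.Walk.length_transfer,
        SimpleGraph.Walk.length_transfer] at this
      have hQ₂l : Q₂.length ≠ 0 := by
        intro h0
        exact hQ₂n (SimpleGraph.Walk.nil_iff_length_eq.mpr h0)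
      omega
    · rw [SimpleGraph.Walk.tail_support_append, SimpleGraph.Walk.support_reverse,
        SimpleGraph.Walk.support_transfer, SimpleGraph.Walk.support_transfer,
        List.nodup_append']
      refine ⟨(List.nodup_reverse.mpr hQ₁path.support_nodup).tail,
        (List.nodup_append'.mp hnds₂).2.1, ?_⟩
      intro z h1 h2
      exact hdisj z h1 h2
  -- edge set of the combined walk
  have hWedges : ∀ e, e ∈ Wc.edges ↔ e ∈ Q₁.edges ∨ e ∈ Q₂.edges := by
    intro e
    rw [hWcdef, SimpleGraph.Walk.edges_append, SimpleGraph.Walk.edges_reverse,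
      SimpleGraph.Walk.edges_transfer, SimpleGraph.Walk.edges_transfer,
      List.mem_append, List.mem_reverse]
  have hWcE : (SimpleGraph.fromEdgeSet (symmDiff C₁.edgeSet C₂.edgeSet)).edgeSet
      = {e | e ∈ Wc.edges} := by
    rw [SimpleGraph.edgeSet_fromEdgeSet]
    ext e
    simp only [Set.mem_setOf_eq, Set.mem_diff]
    constructor
    · rintro ⟨hsd, -⟩
      rw [Set.mem_symmDiff] at hsd
      rw [hWedges]
      rcases hsd with ⟨h1, h2⟩ | ⟨h2, h1⟩
      · left
        have hmem : e ∈ (P₁.append Q₁).edges := by rw [hE₁] at h1; exact h1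
        rw [SimpleGraph.Walk.edges_append, List.mem_append] at hmem
        rcases hmem with hP | hQ
        · exfalso
          apply h2
          have hepw : e ∈ pw.edges := by rwa [hP₁edges] at hP
          have hecc : e ∈ (C₁ ⊓ C₂).edgeSet := by rw [hpwE]; exact hepw
          rw [SimpleGraph.edgeSet_inf] at hecc
          exact hecc.2
        · exact hQ
      · right
        have hmem : e ∈ (P₂.append Q₂).edges := by rw [hE₂] at h2; exact h2
        rw [SimpleGraph.Walk.edges_append, List.mem_append] at hmem
        rcases hmem with hP | hQ
        · exfalso
          apply h1
          have hepw : e ∈ pw.edges := by rwa [hP₂edges] at hP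
          have hecc : e ∈ (C₁ ⊓ C₂).edgeSet := by rw [hpwE]; exact hepw
          rw [SimpleGraph.edgeSet_inf] at hecc
          exact hecc.1
        · exact hQ
    · intro h
      replace h := (hWedges e).mp h
      refine ⟨?_, ?_⟩
      · rw [Set.mem_symmDiff]
        rcases h with h | h
        · exact Or.inl ⟨hQ₁E e h, hQ₁nE₂ e h⟩
        · exact Or.inr ⟨hQ₂E e h, hQ₂nE₁ e h⟩
      · intro hd
        rcases h with h | h
        · exact (C₁.not_isDiag_of_mem_edgeSet (hQ₁E e h)) hd
        · exact (C₂.not_isDiag_of_mem_edgeSet (hQ₂E e h)) hd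
  -- null-homotopy of the combined walk
  refine ⟨u, Wc, hWccyc, hWcE, ?_⟩
  show Relation.EqvGen
    (HStep Gu fun a b c => facesOf steps₁ a b c ∨ facesOf steps₂ a b c) Wc.support [u]
  set Fu : V → V → V → Prop :=
    fun a b c => facesOf steps₁ a b c ∨ facesOf steps₂ a b c with hFu
  have hNH₁u : Relation.EqvGen (HStep Gu Fu) ((P₁.append Q₁).support) [u] :=
    EqvGen.hmono le_sup_left (fun a b c h => Or.inl h) hNH₁
  have hNH₂u : Relation.EqvGen (HStep Gu Fu) ((P₂.append Q₂).support) [u] :=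
    EqvGen.hmono le_sup_right (fun a b c h => Or.inr h) hNH₂
  have hQ₁tail : Q₁.support.reverse.dropLast = Q₁.support.tail.reverse := by
    conv_lhs => rw [Q₁.support_eq_cons]
    rw [List.reverse_cons, List.dropLast_concat]
  have st1 := insert_backtrack (G := Gu) (F := Fu) P'.reverse
    Q₁.support.reverse.dropLast Q₂.support.tail
  have hdropA : Q₁.support.reverse.dropLast ++ [v] = Q₁.support.reverse := by
    have h5 := support_dropLast_append Q₁'.reverse
    rwa [SimpleGraph.Walk.support_reverse, SimpleGraph.Walk.support_transfer,
      ← SimpleGraph.Walk.support_reverse, SimpleGraph.Walk.support_reverse] at h5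
  have e1 : Q₁.support.reverse.dropLast ++ v :: Q₂.support.tail = Wc.support := by
    rw [hWsup, ← hdropA]
    simp
  have e2 : Q₁.support.reverse.dropLast ++ P'.reverse.support ++
      P'.reverse.reverse.support.tail ++ Q₂.support.tail
      = (P₁.append Q₁).support.reverse ++ ((P₂.append Q₂).support).tail := by
    have r1 : (P₁.append Q₁).support.reverse
        = Q₁.support.tail.reverse ++ P₁.support.reverse := by
      rw [SimpleGraph.Walk.support_append, List.reverse_append]
    have r2 : ((P₂.append Q₂).support).tail = P₂.support.tail ++ Q₂.support.tail :=
      SimpleGraph.Walk.tail_support_append _ _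
    rw [SimpleGraph.Walk.reverse_reverse, SimpleGraph.Walk.support_reverse,
      SimpleGraph.Walk.support_transfer, hQ₁tail, r1, r2, hP₁sup, hP₂sup]
    simp [List.append_assoc]
  rw [e1, e2] at st1
  have hL₁ : (P₁.append Q₁).support = u :: (P₁.append Q₁).support.tail :=
    SimpleGraph.Walk.support_eq_cons _
  have hL₂ : (P₂.append Q₂).support = u :: (P₂.append Q₂).support.tail :=
    SimpleGraph.Walk.support_eq_cons _
  have st3 := EqvGen.hcongr (G := Gu) (F := Fu)
    (P₁.append Q₁).support.tail.reverse [] hNH₂u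
  have e3 : (P₁.append Q₁).support.tail.reverse ++ (P₂.append Q₂).support ++ []
      = (P₁.append Q₁).support.reverse ++ (P₂.append Q₂).support.tail := by
    have key : ∀ (t1 t2 : List V), t1.reverse ++ (u :: t2) ++ [] = (u :: t1).reverse ++ t2 := by
      intro t1 t2; simp
    conv_lhs => rw [hL₂]
    conv_rhs => rw [hL₁]
    exact key _ _
  have e4 : (P₁.append Q₁).support.tail.reverse ++ [u] ++ []
      = (P₁.append Q₁).support.reverse := by
    have key : ∀ (t1 : List V), t1.reverse ++ [u] ++ [] = (u :: t1).reverse := by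
      intro t1; simp
    conv_rhs => rw [hL₁]
    exact key _
  rw [e3, e4] at st3
  have st4 : Relation.EqvGen (HStep Gu Fu) ((P₁.append Q₁).support.reverse) [u] := by
    have := EqvGen.hrev hFus hNH₁u
    simpa using this
  exact (st1.trans _ _ _ st3).trans _ _ _ st4

end WSat
end

section
/- Let C be a cycle in a graph, let x, y ∈ V(C), and let P be a path with endpoints x and y such that dist_C(x,y) > |E(P)|. Then there is a subpath P' ⊆ P such that V(P') ∩ V(C) = {a, b}, where a and b are the endpoints of P', and dist_C(a,b) > dist_P(a,b) = |E(P')|. -/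
namespace WSat

variable {V : Type} [Fintype V] [DecidableEq V]

open SimpleGraph Walk

lemma mem_walkEdgeGraph_edgeSet {G : SimpleGraph V} {s t : V} {w : G.Walk s t}
    {e : Sym2 V} (he : e ∈ w.edges) : e ∈ (walkEdgeGraph w).edgeSet := by
  rw [walkEdgeGraph, edgeSet_fromEdgeSet]
  exact ⟨he, G.not_isDiag_of_mem_edgeSet (w.edges_subset_edgeSet he)⟩

lemma adj_walkEdgeGraph {G : SimpleGraph V} {s t : V} {w : G.Walk s t}
    {u v : V} (h : (walkEdgeGraph w).Adj u v) : s(u, v) ∈ w.edges := by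
  rw [walkEdgeGraph, fromEdgeSet_adj] at h
  exact h.1

/-- Reachability inside the edge graph of a closed walk. -/
lemma reachable_walkEdgeGraph {G : SimpleGraph V} {r : V} (c : G.Walk r r)
    {u v : V} (hu : u ∈ c.support) (hv : v ∈ c.support) :
    (walkEdgeGraph c).Reachable u v := by
  have hv' : v ∈ (c.rotate u hu).support := by
    rcases eq_or_ne v u with rfl | hne
    · exact Walk.start_mem_support _
    · rw [Walk.mem_support_iff]
      right
      rw [(c.support_rotate u hu).mem_iff]
      cases c with
      | nil =>
        simp only [Walk.support_nil, List.mem_singleton] at hv hu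
        exact absurd (hv.trans hu.symm) hne
      | cons h q =>
        simp only [Walk.support_cons, List.mem_cons] at hv
        simp only [Walk.support_cons, List.tail_cons]
        rcases hv with rfl | hv
        · exact q.end_mem_support
        · exact hv
  refine ⟨((c.rotate u hu).takeUntil v hv').transfer (walkEdgeGraph c) ?_⟩
  intro e he
  exact mem_walkEdgeGraph_edgeSet
    ((c.rotate_edges u hu).mem_iff.mp ((c.rotate u hu).edges_takeUntil_subset hv' he))

lemma dist_triangle' {H : SimpleGraph V} {u v w : V}
    (h1 : H.Reachable u v) (h2 : H.Reachable v w) :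
    H.dist u w ≤ H.dist u v + H.dist v w := by
  obtain ⟨p, hp⟩ := h1.exists_walk_length_eq_dist
  obtain ⟨q, hq⟩ := h2.exists_walk_length_eq_dist
  rw [← hp, ← hq, ← Walk.length_append]
  exact dist_le _

/-- In a path, endpoints of an edge have indices differing by one. -/
lemma idx_of_mem_edges {G : SimpleGraph V} {x y : V} (p : G.Walk x y) (hp : p.IsPath) :
    ∀ u v : V, s(u, v) ∈ p.edges →
      p.support.idxOf v = p.support.idxOf u + 1 ∨
      p.support.idxOf u = p.support.idxOf v + 1 := by
  induction p with
  | nil => simp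
  | @cons a b _ hab q ih =>
    intro u v he
    have hq : q.IsPath := hp.of_cons
    have hna : a ∉ q.support := by
      have := hp.support_nodup
      simp only [Walk.support_cons, List.nodup_cons] at this
      exact this.1
    rw [Walk.edges_cons, List.mem_cons] at he
    rcases he with he | he
    · rw [Sym2.eq_iff] at he
      have hb0 : q.support.idxOf b = 0 := by
        rw [q.support_eq_cons]; exact List.idxOf_cons_self
      rcases he with ⟨hu, hv⟩ | ⟨hu, hv⟩
      · subst hu; subst hv
        left
        rw [Walk.support_cons, List.idxOf_cons_self,
          List.idxOf_cons_ne _ (G.ne_of_adj hab), hb0]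
      · subst hu; subst hv
        right
        rw [Walk.support_cons, List.idxOf_cons_self,
          List.idxOf_cons_ne _ (G.ne_of_adj hab), hb0]
    · have hu : u ∈ q.support := q.fst_mem_support_of_mem_edges he
      have hv : v ∈ q.support := q.snd_mem_support_of_mem_edges he
      have hua : a ≠ u := fun h => hna (h ▸ hu)
      have hva : a ≠ v := fun h => hna (h ▸ hv)
      rw [Walk.support_cons, List.idxOf_cons_ne _ hua, List.idxOf_cons_ne _ hva]
      rcases ih hq u v he with h | h
      · left; omega
      · right; omega

/-- Walks in the edge graph of a path change the index by at most one per step. -/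
lemma idx_lipschitz {G : SimpleGraph V} {x y : V} (p : G.Walk x y) (hp : p.IsPath) :
    ∀ {u v : V} (w : (walkEdgeGraph p).Walk u v),
      |(p.support.idxOf u : ℤ) - (p.support.idxOf v : ℤ)| ≤ w.length := by
  intro u v w
  induction w with
  | nil => simp
  | @cons a b f hab q ih =>
    have he : s(a, b) ∈ p.edges := adj_walkEdgeGraph hab
    have h1 : |(p.support.idxOf a : ℤ) - (p.support.idxOf b : ℤ)| = 1 := by
      rcases idx_of_mem_edges p hp a b he with h | h
      · rw [h]; push_cast; simp
      · rw [h]; push_cast; simp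
    rw [Walk.length_cons]
    calc |(p.support.idxOf a : ℤ) - (p.support.idxOf f : ℤ)|
        ≤ |(p.support.idxOf a : ℤ) - (p.support.idxOf b : ℤ)|
            + |(p.support.idxOf b : ℤ) - (p.support.idxOf f : ℤ)| := abs_sub_le _ _ _
      _ ≤ 1 + q.length := by rw [h1]; linarith
      _ = ((q.length + 1 : ℕ) : ℤ) := by push_cast; ring

/-- The index of the junction vertex of a path decomposition. -/
lemma idx_append {G : SimpleGraph V} :
    ∀ {x a y : V} (q₁ : G.Walk x a) (q₂ : G.Walk a y),
      (q₁.append q₂).IsPath → (q₁.append q₂).support.idxOf a = q₁.length := by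
  intro x a y q₁
  induction q₁ with
  | nil => intro q₂ _; rw [Walk.nil_append, q₂.support_eq_cons]; exact List.idxOf_cons_self
  | @cons s t f hst q ih =>
    intro q₂ hpath
    rw [Walk.cons_append] at hpath ⊢
    have hns : s ∉ (q.append q₂).support := by
      have := hpath.support_nodup
      simp only [Walk.support_cons, List.nodup_cons] at this
      exact this.1
    have ha : f ∈ (q.append q₂).support := by
      rw [Walk.mem_support_append_iff]; exact Or.inl q.end_mem_support
    have hsa : s ≠ f := fun h => hns (h ▸ ha)
    rw [Walk.support_cons, List.idxOf_cons_ne _ hsa, ih q₂ hpath.of_cons]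
    simp [Walk.length_cons]

/-- Main inductive decomposition lemma. -/
lemma main_decomp {G : SimpleGraph V} {r : V} (c : G.Walk r r) :
    ∀ (n : ℕ) (x y : V), x ∈ c.support → y ∈ c.support →
      ∀ (p : G.Walk x y), p.IsPath → p.length ≤ n →
      p.length < (walkEdgeGraph c).dist x y →
      ∃ (a b : V) (q₁ : G.Walk x a) (p' : G.Walk a b) (q₂ : G.Walk b y),
        p = q₁.append (p'.append q₂) ∧ a ∈ c.support ∧ b ∈ c.support ∧
        (∀ z ∈ p'.support, z ∈ c.support → z = a ∨ z = b) ∧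
        p'.length < (walkEdgeGraph c).dist a b := by
  intro n
  induction n with
  | zero =>
    intro x y hx hy p hp hlen hlt
    have hxy : x = y := Walk.eq_of_length_eq_zero (Nat.le_zero.mp hlen)
    subst hxy
    rw [Nat.le_zero.mp hlen] at hlt
    rw [SimpleGraph.dist_self] at hlt
    omega
  | succ n ih =>
    intro x y hx hy p hp hlen hlt
    by_cases hint : ∃ z, z ∈ p.support ∧ z ∈ c.support ∧ z ≠ x ∧ z ≠ y
    · obtain ⟨z, hzp, hzc, hzx, hzy⟩ := hint
      set p₁ := p.takeUntil z hzp with hp₁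
      set p₂ := p.dropUntil z hzp with hp₂
      have hsplit : p₁.append p₂ = p := p.take_spec hzp
      have hlensum : p₁.length + p₂.length = p.length := by
        rw [← hsplit, Walk.length_append]
      have h1pos : 1 ≤ p₁.length := by
        by_contra h
        exact hzx (Walk.eq_of_length_eq_zero (p := p₁) (by omega)).symm
      have h2pos : 1 ≤ p₂.length := by
        by_contra h
        exact hzy (Walk.eq_of_length_eq_zero (p := p₂) (by omega))
      have htri : (walkEdgeGraph c).dist x y ≤
          (walkEdgeGraph c).dist x z + (walkEdgeGraph c).dist z y :=
        dist_triangle' (reachable_walkEdgeGraph c hx hzc) (reachable_walkEdgeGraph c hzc hy)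
      have hcase : p₁.length < (walkEdgeGraph c).dist x z ∨
          p₂.length < (walkEdgeGraph c).dist z y := by
        by_contra h
        push_neg at h
        omega
      have hb1 : p₁.length ≤ n := by omega
      have hb2 : p₂.length ≤ n := by omega
      rcases hcase with hcase | hcase
      · obtain ⟨a, b, q₁, p', q₂', hdec, ha, hb, hintp, hlt'⟩ :=
          ih x z hx hzc p₁ (hp.takeUntil hzp) hb1 hcase
        refine ⟨a, b, q₁, p', q₂'.append p₂, ?_, ha, hb, hintp, hlt'⟩
        rw [← hsplit, hdec]
        simp only [← Walk.append_assoc]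
      · obtain ⟨a, b, q₁', p', q₂, hdec, ha, hb, hintp, hlt'⟩ :=
          ih z y hzc hy p₂ (hp.dropUntil hzp) hb2 hcase
        refine ⟨a, b, p₁.append q₁', p', q₂, ?_, ha, hb, hintp, hlt'⟩
        rw [← hsplit, hdec]
        simp only [← Walk.append_assoc]
    · push_neg at hint
      refine ⟨x, y, Walk.nil, p, Walk.nil, by simp, hx, hy, ?_, hlt⟩
      intro z hz1 hz2
      rcases eq_or_ne z x with h | h
      · exact Or.inl h
      · exact Or.inr (hint z hz1 hz2 h)

/-- Let `C` be a cycle in a graph, `x, y ∈ V(C)`, and let `P` be a path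
with endpoints `x` and `y` such that `dist_C(x,y) > |E(P)|`. Then there is a subpath
`P' ⊆ P` with endpoints `a, b` such that `V(P') ∩ V(C) = {a, b}` and
`dist_C(a,b) > dist_P(a,b) = |E(P')|`. -/
theorem statement18 (G : SimpleGraph V) (r : V) (c : G.Walk r r) (hc : c.IsCycle)
    (x y : V) (hx : x ∈ c.support) (hy : y ∈ c.support)
    (p : G.Walk x y) (hp : p.IsPath)
    (hdist : p.length < (walkEdgeGraph c).dist x y) :
    ∃ (a b : V) (p' : G.Walk a b), p'.IsPath ∧
      (∀ z ∈ p'.support, z ∈ p.support) ∧ (∀ e ∈ p'.edges, e ∈ p.edges) ∧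
      {z | z ∈ p'.support} ∩ {z | z ∈ c.support} = ({a, b} : Set V) ∧
      (walkEdgeGraph p).dist a b = p'.length ∧
      (walkEdgeGraph p).dist a b < (walkEdgeGraph c).dist a b := by
  obtain ⟨a, b, q₁, p', q₂, hdec, ha, hb, hintp, hlt⟩ :=
    main_decomp c p.length x y hx hy p hp le_rfl hdist
  have hsupp : ∀ z ∈ p'.support, z ∈ p.support := by
    intro z hz
    rw [hdec, Walk.mem_support_append_iff, Walk.mem_support_append_iff]
    exact Or.inr (Or.inl hz)
  have hedges : ∀ e ∈ p'.edges, e ∈ p.edges := by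
    intro e he
    rw [hdec, Walk.edges_append, Walk.edges_append, List.mem_append, List.mem_append]
    exact Or.inr (Or.inl he)
  have hp' : p'.IsPath := by
    rw [hdec] at hp
    exact hp.of_append_right.of_append_left
  -- the transferred walk
  have htrans : ∀ e ∈ p'.edges, e ∈ (walkEdgeGraph p).edgeSet := fun e he =>
    mem_walkEdgeGraph_edgeSet (hedges e he)
  have hdle : (walkEdgeGraph p).dist a b ≤ p'.length := by
    have := SimpleGraph.dist_le (p'.transfer (walkEdgeGraph p) htrans)
    rwa [Walk.length_transfer] at this
  have hidxa : p.support.idxOf a = q₁.length := by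
    rw [hdec]; exact idx_append q₁ (p'.append q₂) (hdec ▸ hp)
  have hidxb : p.support.idxOf b = q₁.length + p'.length := by
    have hdec2 : p = (q₁.append p').append q₂ := by rw [hdec, Walk.append_assoc]
    have := idx_append (q₁.append p') q₂ (hdec2 ▸ hp)
    rw [hdec2]
    rw [this, Walk.length_append]
  have hdge : p'.length ≤ (walkEdgeGraph p).dist a b := by
    have hreach : (walkEdgeGraph p).Reachable a b :=
      ⟨p'.transfer (walkEdgeGraph p) htrans⟩
    obtain ⟨w, hw⟩ := hreach.exists_walk_length_eq_dist
    have := idx_lipschitz p hp w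
    rw [hidxa, hidxb, hw] at this
    have habs : |(q₁.length : ℤ) - ((q₁.length + p'.length : ℕ) : ℤ)| = p'.length := by
      push_cast; simp
    rw [habs] at this
    exact_mod_cast this
  have hdeq : (walkEdgeGraph p).dist a b = p'.length := le_antisymm hdle hdge
  refine ⟨a, b, p', hp', hsupp, hedges, ?_, hdeq, by rw [hdeq]; exact hlt⟩
  ext z
  simp only [Set.mem_inter_iff, Set.mem_setOf_eq, Set.mem_insert_iff, Set.mem_singleton_iff]
  constructor
  · rintro ⟨h1, h2⟩
    exact hintp z h1 h2
  · rintro (rfl | rfl)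
    · exact ⟨p'.start_mem_support, ha⟩
    · exact ⟨p'.end_mem_support, hb⟩

end WSat
end
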